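/- arXiv:2004.02821 — 4 statements merged into one kernel-verified Lean document; each statement's English description precedes it below -/
import Mathlib

section
/- In ŝl_∞[ℤ], define e_{i,j}(m₀,m₁) = (E_{Nm₁+i,j}⊗t^{m₀})‾ for 1 ≤ i,j ≤ N, m₀,m₁ ∈ ℤ with (i,m₁) ≠ (j,0), and e_{i,i}(m₀,0) = (1−q^{−m₀})^{−1}((E_{i,i}−E_{N+i,N+i})⊗t^{m₀})‾ for m₀ ≠ 0; also set k' = (E_{N+1,N+1}−E_{1,1})‾ and h̄_r = (E_{r,r}−E_{r+1,r+1})‾ for 1 ≤ r ≤ N−1. Then: (1) for all 1 ≤ i,j ≤ N and m₀,m₁,n₁ ∈ ℤ with (i,m₁) ≠ (j,n₁), (E_{Nm₁+i,Nn₁+j}⊗t^{m₀})‾ = q^{−m₀n₁}e_{i,j}(m₀, m₁−n₁); (2) under the same hypothesis, ((E_{Nm₁+i,Nm₁+i} − E_{Nn₁+j,Nn₁+j})⊗t^{m₀})‾ equals q^{−m₀m₁}e_{i,i}(m₀,0) − q^{−m₀n₁}e_{j,j}(m₀,0) if m₀ ≠ 0, and equals (E_{i,i}−E_{j,j})‾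 + (m₁−n₁)k' if m₀ = 0; (3) the elements e_{i,j}(m₀,m₁) for 1 ≤ i,j ≤ N, m₀,m₁ ∈ ℤ with (i−j,m₀,m₁) ≠ (0,0,0), together with h̄_r for 1 ≤ r ≤ N−1, k', and k, form a ℂ-basis of ŝl_∞[ℤ]. -/
/-- An incarnation of the Lie algebra `gl_∞`. -/
structure GlInf (g : Type*) [LieRing g] [LieAlgebra ℂ g] where
  E : ℤ → ℤ → g
  bE : Module.Basis (ℤ × ℤ) ℂ g
  bE_eq : ∀ p : ℤ × ℤ, bE p = E p.1 p.2
  bracket_E : ∀ i j k l : ℤ, ⁅E i j, E k l⁆ =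
    (if j = k then E i l else 0) - (if l = i then E k j else 0)

/-- The trace form on `gl_∞`. -/
noncomputable def GlInf.form {g : Type*} [LieRing g] [LieAlgebra ℂ g] (Gi : GlInf g) :
    g → g → ℂ :=
  fun x y => (Gi.bE.repr x).sum fun p c => c * (Gi.bE.repr y) (p.2, p.1)

section slInf

variable {g : Type*} [LieRing g] [LieAlgebra ℂ g]

lemma GlInf.diff_mem (Gi : GlInf g) (i j : ℤ) :
    Gi.E i i - Gi.E j j ∈ LieAlgebra.derivedSeries ℂ g 1 := by
  have he : Gi.E i i - Gi.E j j = ⁅Gi.E i j, Gi.E j i⁆ := by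
    rw [Gi.bracket_E]; simp
  rw [he, LieAlgebra.derivedSeries_def, LieAlgebra.derivedSeriesOfIdeal_succ,
    LieAlgebra.derivedSeriesOfIdeal_zero]
  exact LieSubmodule.lie_mem_lie (LieSubmodule.mem_top _) (LieSubmodule.mem_top _)

lemma GlInf.offdiag_mem (Gi : GlInf g) {i j : ℤ} (h : i ≠ j) :
    Gi.E i j ∈ LieAlgebra.derivedSeries ℂ g 1 := by
  have he : Gi.E i j = ⁅Gi.E i i, Gi.E i j⁆ := by
    rw [Gi.bracket_E]; simp [h.symm]
  rw [he, LieAlgebra.derivedSeries_def, LieAlgebra.derivedSeriesOfIdeal_succ,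
    LieAlgebra.derivedSeriesOfIdeal_zero]
  exact LieSubmodule.lie_mem_lie (LieSubmodule.mem_top _) (LieSubmodule.mem_top _)

end slInf

lemma shiftIdx_ne {N : ℕ} {i j : ℕ} (hi : i < N) (hj : j < N) {m1 n1 : ℤ}
    (h : ¬(i = j ∧ m1 = n1)) : (N : ℤ) * m1 + (i + 1) ≠ (N : ℤ) * n1 + (j + 1) := by
  intro hc
  rcases eq_or_ne m1 n1 with he | he
  · subst he
    have hij : (i : ℤ) = j := by linarith
    exact h ⟨by exact_mod_cast hij, rfl⟩
  · have h1 : (N : ℤ) * (m1 - n1) = (j : ℤ) - i := by linear_combination hc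
    have hi' : (i : ℤ) < N := by exact_mod_cast hi
    have hj' : (j : ℤ) < N := by exact_mod_cast hj
    have hi0 : (0 : ℤ) ≤ i := Int.natCast_nonneg i
    have hj0 : (0 : ℤ) ≤ j := Int.natCast_nonneg j
    rcases he.lt_or_gt with hlt | hlt
    · have h2 : m1 - n1 ≤ -1 := by omega
      have h3 : (N : ℤ) * (m1 - n1) ≤ (N : ℤ) * (-1) :=
        mul_le_mul_of_nonneg_left h2 (by positivity)
      have h4 : (N : ℤ) * (-1) = -N := by ring
      linarith
    · have h2 : (1 : ℤ) ≤ m1 - n1 := by omega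
      have h3 : (N : ℤ) * 1 ≤ (N : ℤ) * (m1 - n1) :=
        mul_le_mul_of_nonneg_left h2 (by positivity)
      have h4 : (N : ℤ) * 1 = N := by ring
      linarith

/-- An incarnation of the `(ℤ, χ_q)`-covariant algebra of the affine Lie algebra of a Lie
algebra `s` with bilinear form `B` and `ℤ`-action `σ`, where `χ_q(r) = qʳ`. -/
structure CovZAlg (q : ℂ) (s : Type*) [LieRing s] [LieAlgebra ℂ s]
    (B : s → s → ℂ) (σ : ℤ → s → s)
    (C : Type*) [LieRing C] [LieAlgebra ℂ C] where
  atE : ℤ → s → C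
  k : C
  atE_add : ∀ (m : ℤ) (x y : s), atE m (x + y) = atE m x + atE m y
  atE_smul : ∀ (m : ℤ) (c : ℂ) (x : s), atE m (c • x) = c • atE m x
  k_central : ∀ x : C, ⁅k, x⁆ = 0
  inv : ∀ (r m : ℤ) (x : s), atE m x = q ^ (r * m) • atE m (σ r x)
  bracket : ∀ (m n : ℤ) (x y : s),
    ⁅atE m x, atE n y⁆ = ∑ᶠ r : ℤ, q ^ (r * m) •
      (atE (m + n) ⁅σ r x, y⁆ + ((if m + n = 0 then (m : ℂ) * B (σ r x) y else 0)) • k)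
  spans : Submodule.span ℂ ({k} ∪ {z | ∃ (m : ℤ) (x : s), z = atE m x}) = ⊤
  kerPi : ∀ (f : ℤ →₀ s) (β : ℂ),
    ((f.sum fun m x => atE m x) + β • k = 0) ↔
      (f, β) ∈ Submodule.span ℂ
        {u : (ℤ →₀ s) × ℂ | ∃ (r m : ℤ) (x : s),
          u = (Finsupp.single m (q ^ (r * m) • σ r x - x), 0)}

section eElt

variable {g : Type*} [LieRing g] [LieAlgebra ℂ g] (Gi : GlInf g)
variable (q : ℂ) (N : ℕ)
variable {C : Type*} [LieRing C] [LieAlgebra ℂ C]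
variable {B : ↥(LieAlgebra.derivedSeries ℂ g 1) → ↥(LieAlgebra.derivedSeries ℂ g 1) → ℂ}
variable {σs : ℤ → ↥(LieAlgebra.derivedSeries ℂ g 1) → ↥(LieAlgebra.derivedSeries ℂ g 1)}
variable (Cov : CovZAlg q ↥(LieAlgebra.derivedSeries ℂ g 1) B σs C)

/-- The elements `e_{i,j}(m₀,m₁)` of `ŝl_∞[ℤ]`: for `(i,m₁) ≠ (j,0)`,
`e_{i,j}(m₀,m₁) = (E_{Nm₁+i,j} ⊗ t^{m₀})‾`, and for `m₀ ≠ 0`,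
`e_{i,i}(m₀,0) = (1-q^{-m₀})⁻¹ ((E_{i,i}-E_{N+i,N+i}) ⊗ t^{m₀})‾`. -/
noncomputable def eElt (i j : Fin N) (m0 m1 : ℤ) : C :=
  if h : i = j ∧ m1 = 0 then
    (1 - q ^ (-m0))⁻¹ • Cov.atE m0
      ⟨Gi.E ((i.1 : ℤ) + 1) ((i.1 : ℤ) + 1) -
        Gi.E (((i.1 : ℤ) + 1) + N) (((i.1 : ℤ) + 1) + N), Gi.diff_mem _ _⟩
  else Cov.atE m0
    ⟨Gi.E ((N : ℤ) * m1 + ((i.1 : ℤ) + 1)) ((j.1 : ℤ) + 1), Gi.offdiag_mem (by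
      have hne : ¬(i.1 = j.1 ∧ m1 = 0) := fun hc => h ⟨Fin.ext hc.1, hc.2⟩
      simpa using shiftIdx_ne i.isLt j.isLt hne)⟩

/-- The element `k' = (E_{N+1,N+1} - E_{1,1})‾` of `ŝl_∞[ℤ]`. -/
noncomputable def kprimeElt : C :=
  Cov.atE 0 ⟨Gi.E ((N : ℤ) + 1) ((N : ℤ) + 1) - Gi.E 1 1, Gi.diff_mem _ _⟩

end eElt

/-- Index set: quadruples `(i,j,m₀,m₁)` with `(i-j,m₀,m₁) ≠ (0,0,0)`, indices
`r = 1,…,N-1`, and two further indices (for `k'` and `k`). -/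
def slNCqIdx (N : ℕ) : Type :=
  {p : Fin N × Fin N × ℤ × ℤ // ¬(p.1 = p.2.1 ∧ p.2.2.1 = 0 ∧ p.2.2.2 = 0)} ⊕
    (Fin (N - 1) ⊕ Fin 2)

section slCovFam

variable {g : Type*} [LieRing g] [LieAlgebra ℂ g] (Gi : GlInf g)
variable (q : ℂ) (N : ℕ)
variable {C : Type*} [LieRing C] [LieAlgebra ℂ C]
variable {B : ↥(LieAlgebra.derivedSeries ℂ g 1) → ↥(LieAlgebra.derivedSeries ℂ g 1) → ℂ}
variable {σs : ℤ → ↥(LieAlgebra.derivedSeries ℂ g 1) → ↥(LieAlgebra.derivedSeries ℂ g 1)}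
variable (Cov : CovZAlg q ↥(LieAlgebra.derivedSeries ℂ g 1) B σs C)

/-- The claimed basis family of `ŝl_∞[ℤ]`: the `e_{i,j}(m₀,m₁)` with
`(i-j,m₀,m₁) ≠ (0,0,0)`, the `h̄_r = (E_{r,r}-E_{r+1,r+1})‾` (`1 ≤ r ≤ N-1`),
`k'` and `k`. -/
noncomputable def slCovFam : slNCqIdx N → C :=
  Sum.elim (fun p => eElt Gi q N Cov p.1.1 p.1.2.1 p.1.2.2.1 p.1.2.2.2)
    (Sum.elim
      (fun r => Cov.atE 0
        ⟨Gi.E ((r.1 : ℤ) + 1) ((r.1 : ℤ) + 1) - Gi.E ((r.1 : ℤ) + 2) ((r.1 : ℤ) + 2),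
          Gi.diff_mem _ _⟩)
      ![kprimeElt Gi q N Cov, Cov.k])

end slCovFam


/-!
The defining relation `(x ⊗ tᵐ)‾ = q^{rm} (σ^{Nr} x ⊗ tᵐ)‾` moves `E_{Na+i,Nb+j} ⊗ tᵐ` to block
column `0`, which is (1). Applied to `E_{a,a} - E_{a+N,a+N}` it lets one divide by `1 - q^{-m}`
when `m ≠ 0`, which is (2); in degree `0` it makes `(E_{a+N,a+N} - E_{a,a})‾ = k'` independent
of `a`, and telescoping gives (3). These relations show that the family spans.

For independence we build coordinates on `ŝl_∞[ℤ]` in which the family is the standard basis.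
On the affine algebra they are defined on the basis of `gl_∞` following (1), plus, in degree `0`,
a term recording the block index `a` of `E_{Na+i,Na+i}` as `a k'`; they vanish on the defining
relations of the covariant algebra (the `a k'` term only because `sl_∞` is traceless) and so
descend to it.
-/

open LieAlgebra

lemma zpow_ne_one_of_pow_ne_one {G₀ : Type*} [GroupWithZero G₀] {q : G₀}
    (hq' : ∀ n : ℕ, n ≠ 0 → q ^ n ≠ 1) {m : ℤ} (hm : m ≠ 0) : q ^ m ≠ 1 := by
  have hn := hq' _ (Int.natAbs_ne_zero.mpr hm)
  rcases Int.natAbs_eq m with h | h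
  · rwa [h, zpow_natCast]
  · rwa [h, zpow_neg, zpow_natCast, inv_ne_one]

lemma add_mul_eq_add_zsmul_of_sub_eq {M : Type*} [AddCommGroup M] {f : ℤ → M} {p : ℤ} {c : M}
    (h : ∀ a, f (a + p) - f a = c) (a m : ℤ) : f (a + p * m) = f a + m • c := by
  induction m using Int.induction_on with
  | zero => simp
  | succ m ih =>
    rw [mul_add_one, ← add_assoc, ← sub_add_cancel (f _) (f (a + p * m)), h, ih, add_zsmul,
      one_zsmul]
    abel
  | pred m ih =>
    have step := h (a + p * (-m - 1))
    rw [add_assoc, ← mul_add_one, sub_add_cancel, ih] at step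
    calc f (a + p * (-m - 1)) = f a + (-m : ℤ) • c - c := by
          rw [sub_eq_iff_eq_add.mp step, add_sub_cancel_left]
      _ = f a + (-m - 1 : ℤ) • c := by rw [sub_zsmul, one_zsmul]; abel

lemma Submodule.sub_mem_of_forall_sub_succ_mem {R M : Type*} [Ring R] [AddCommGroup M]
    [Module R M] (W : Submodule R M) {v : ℕ → M} {n : ℕ}
    (h : ∀ c, c + 1 < n → v c - v (c + 1) ∈ W) {i j : ℕ} (hi : i < n) (hj : j < n) :
    v i - v j ∈ W := by
  suffices ∀ i < n, v i - v 0 ∈ W by simpa using W.sub_mem (this i hi) (this j hj)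
  intro i hi
  induction i with
  | zero => simp
  | succ i ih => simpa using W.sub_mem (ih (by omega)) (h i hi)

section affineLift

variable {s V : Type*} [AddCommGroup s] [Module ℂ s] [AddCommGroup V] [Module ℂ V]
  (τ : ℤ → s →ₗ[ℂ] V) (κ : V)

/-- The linear map out of the affine algebra `(ℤ →₀ s) × ℂ` (the pairs `(∑ₘ f m ⊗ tᵐ, β k)`)
with graded pieces `τ m` and value `κ` on `k`. -/
noncomputable def affineLift : ((ℤ →₀ s) × ℂ) →ₗ[ℂ] V :=
  Finsupp.lsum ℂ τ ∘ₗ LinearMap.fst ℂ _ ℂ + LinearMap.toSpanSingleton ℂ V κ ∘ₗ LinearMap.snd ℂ _ ℂ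

lemma affineLift_apply (u : (ℤ →₀ s) × ℂ) :
    affineLift τ κ u = (u.1.sum fun m x => τ m x) + u.2 • κ := rfl

lemma affineLift_single (m : ℤ) (x : s) : affineLift τ κ (Finsupp.single m x, 0) = τ m x := by
  simp [affineLift_apply]

lemma affineLift_k : affineLift τ κ (0, 1) = κ := by
  simp [affineLift_apply]

end affineLift

namespace CovZAlg

variable {q : ℂ} {s : Type*} [LieRing s] [LieAlgebra ℂ s] {B : s → s → ℂ} {σ : ℤ → s → s}
  {C : Type*} [LieRing C] [LieAlgebra ℂ C] (Cov : CovZAlg q s B σ C)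

@[simps]
noncomputable def atEₗ (m : ℤ) : s →ₗ[ℂ] C where
  toFun := Cov.atE m
  map_add' := Cov.atE_add m
  map_smul' := Cov.atE_smul m

lemma atE_sub (m : ℤ) (x y : s) : Cov.atE m (x - y) = Cov.atE m x - Cov.atE m y :=
  map_sub (Cov.atEₗ m) x y

lemma atE_sigma (hq : q ≠ 0) (r m : ℤ) (x : s) :
    Cov.atE m (σ r x) = q ^ (-(r * m)) • Cov.atE m x := by
  rw [Cov.inv r m x, smul_smul, ← zpow_add₀ hq, neg_add_cancel, zpow_zero, one_smul]

noncomputable def presentation : ((ℤ →₀ s) × ℂ) →ₗ[ℂ] C := affineLift Cov.atEₗ Cov.k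

lemma presentation_surjective : Function.Surjective Cov.presentation := by
  rw [← LinearMap.range_eq_top, eq_top_iff, ← Cov.spans, Submodule.span_le]
  rintro _ (rfl | ⟨m, x, rfl⟩)
  · exact ⟨_, affineLift_k _ _⟩
  · exact ⟨_, affineLift_single _ _ m x⟩

lemma ker_presentation : LinearMap.ker Cov.presentation = Submodule.span ℂ
    {u | ∃ (r m : ℤ) (x : s), u = (Finsupp.single m (q ^ (r * m) • σ r x - x), 0)} := by
  ext u
  exact LinearMap.mem_ker.trans (Cov.kerPi u.1 u.2)

/-- The universal property of the covariant algebra as a quotient of the affine algebra. -/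
noncomputable def desc {V : Type*} [AddCommGroup V] [Module ℂ V] (τ : ℤ → s →ₗ[ℂ] V) (κ : V)
    (hτ : ∀ (r m : ℤ) (x : s), τ m (q ^ (r * m) • σ r x) = τ m x) : C →ₗ[ℂ] V :=
  (LinearMap.ker Cov.presentation).liftQ (affineLift τ κ) (by
      rw [ker_presentation, Submodule.span_le]
      rintro _ ⟨r, m, x, rfl⟩
      simp [affineLift_apply, Finsupp.sum_single_index, hτ, -Finsupp.single_sub]) ∘ₗ
    (Cov.presentation.quotKerEquivOfSurjective Cov.presentation_surjective).symm

section desc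

variable {V : Type*} [AddCommGroup V] [Module ℂ V] (τ : ℤ → s →ₗ[ℂ] V) (κ : V)
  (hτ : ∀ (r m : ℤ) (x : s), τ m (q ^ (r * m) • σ r x) = τ m x)

lemma desc_presentation (u : (ℤ →₀ s) × ℂ) :
    Cov.desc τ κ hτ (Cov.presentation u) = affineLift τ κ u := by
  simp [desc]

@[simp] lemma desc_atE (m : ℤ) (x : s) : Cov.desc τ κ hτ (Cov.atE m x) = τ m x := by
  simpa [presentation, affineLift_single] using Cov.desc_presentation τ κ hτ (Finsupp.single m x, 0)

@[simp] lemma desc_k : Cov.desc τ κ hτ Cov.k = κ := by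
  simpa [presentation, affineLift_k] using Cov.desc_presentation τ κ hτ (0, 1)

end desc

end CovZAlg

namespace GlInf

variable {g : Type*} [LieRing g] [LieAlgebra ℂ g] (Gi : GlInf g)
  {V : Type*} [AddCommGroup V] [Module ℂ V]

lemma constr_E (v : ℤ × ℤ → V) (a b : ℤ) : Gi.bE.constr ℂ v (Gi.E a b) = v (a, b) := by
  rw [← Gi.bE_eq (a, b), Module.Basis.constr_basis]

lemma linearMap_ext {f f' : g →ₗ[ℂ] V} (h : ∀ a b, f (Gi.E a b) = f' (Gi.E a b)) : f = f' :=
  Gi.bE.ext fun p => by rw [Gi.bE_eq]; exact h p.1 p.2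

def slGens : Set g :=
  {y | (∃ a b, a ≠ b ∧ y = Gi.E a b) ∨ ∃ a b, y = Gi.E a a - Gi.E b b}

lemma slGens_subset_derivedSeries : Gi.slGens ⊆ derivedSeries ℂ g 1 := by
  rintro _ (⟨a, b, hab, rfl⟩ | ⟨a, b, rfl⟩)
  exacts [Gi.offdiag_mem hab, Gi.diff_mem a b]

lemma lie_E_mem_span_slGens (a b c d : ℤ) :
    ⁅Gi.E a b, Gi.E c d⁆ ∈ Submodule.span ℂ Gi.slGens := by
  have diag (a c : ℤ) : Gi.E a a - Gi.E c c ∈ Submodule.span ℂ Gi.slGens :=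
    Submodule.subset_span (Or.inr ⟨a, c, rfl⟩)
  have offdiag {a d : ℤ} (h : a ≠ d) : Gi.E a d ∈ Submodule.span ℂ Gi.slGens :=
    Submodule.subset_span (Or.inl ⟨a, d, h, rfl⟩)
  rw [Gi.bracket_E]
  split_ifs with hbc hda hda
  · subst hbc hda; exact diag d b
  · rw [sub_zero]; exact offdiag (Ne.symm hda)
  · subst hda; rw [zero_sub]; exact Submodule.neg_mem _ (offdiag (Ne.symm hbc))
  · rw [sub_zero]; exact Submodule.zero_mem _

lemma lie_mem_span_slGens (x y : g) : ⁅x, y⁆ ∈ Submodule.span ℂ Gi.slGens := by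
  let K := Submodule.span ℂ Gi.slGens
  suffices (LieModule.toEnd ℂ g g : g →ₗ[ℂ] g →ₗ[ℂ] g).compr₂ K.mkQ = 0 by
    simpa [← Submodule.Quotient.mk_eq_zero] using LinearMap.congr_fun₂ this x y
  refine LinearMap.ext_basis Gi.bE Gi.bE fun p p' => ?_
  simpa [Gi.bE_eq, Submodule.Quotient.mk_eq_zero] using Gi.lie_E_mem_span_slGens _ _ _ _

lemma derivedSeries_le_span_slGens :
    (derivedSeries ℂ g 1).toSubmodule ≤ Submodule.span ℂ Gi.slGens := by
  rw [derivedSeries_def, derivedSeriesOfIdeal_succ, derivedSeriesOfIdeal_zero,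
    LieSubmodule.lieIdeal_oper_eq_linear_span, Submodule.span_le]
  rintro _ ⟨x, y, rfl⟩
  exact Gi.lie_mem_span_slGens x y

lemma span_preimage_slGens :
    Submodule.span ℂ ((derivedSeries ℂ g 1).toSubmodule.subtype ⁻¹' Gi.slGens) = ⊤ := by
  have hsub : Gi.slGens ⊆ LinearMap.range (derivedSeries ℂ g 1).toSubmodule.subtype :=
    fun y hy => ⟨⟨y, Gi.slGens_subset_derivedSeries hy⟩, rfl⟩
  rw [Submodule.span_preimage_eq ⟨Gi.E 0 0 - Gi.E 0 0, Or.inr ⟨0, 0, rfl⟩⟩ hsub,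
    Submodule.comap_subtype_eq_top]
  exact Gi.derivedSeries_le_span_slGens

noncomputable def trace : g →ₗ[ℂ] ℂ := Gi.bE.constr ℂ fun p => if p.1 = p.2 then 1 else 0

lemma trace_E (a b : ℤ) : Gi.trace (Gi.E a b) = if a = b then 1 else 0 := Gi.constr_E _ a b

lemma trace_eq_zero_of_mem {x : g} (hx : x ∈ derivedSeries ℂ g 1) : Gi.trace x = 0 := by
  suffices Submodule.span ℂ Gi.slGens ≤ LinearMap.ker Gi.trace from
    this (Gi.derivedSeries_le_span_slGens hx)
  rw [Submodule.span_le]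
  rintro _ (⟨a, b, hab, rfl⟩ | ⟨a, b, rfl⟩) <;> simp [trace_E, *]

variable (N : ℕ)

noncomputable def shift (r : ℤ) : g →ₗ[ℂ] g :=
  Gi.bE.constr ℂ fun p => Gi.E (p.1 + N * r) (p.2 + N * r)

lemma shift_E (r a b : ℤ) : Gi.shift N r (Gi.E a b) = Gi.E (a + N * r) (b + N * r) :=
  Gi.constr_E _ a b

variable {N} in
lemma apply_eq_shift {σg : ℤ → g → g} (hlin : ∀ r, IsLinearMap ℂ (σg r))
    (hσ : ∀ r m n : ℤ, σg r (Gi.E m n) = Gi.E (m + N * r) (n + N * r)) (r : ℤ) (x : g) :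
    σg r x = Gi.shift N r x :=
  LinearMap.congr_fun (Gi.linearMap_ext (f := IsLinearMap.mk' (σg r) (hlin r))
    fun a b => by simp [hσ, shift_E]) x

end GlInf

/-- `(d, i) ↦ N d + i + 1`: the row `N d + i + 1` of `gl_∞` is row `i + 1` of block `d`,
with `i : Fin N` zero-based. -/
def blockEquiv (N : ℕ) [NeZero N] : ℤ × Fin N ≃ ℤ :=
  (Int.divModEquiv N).symm.trans (Equiv.addRight 1)

section blockEquiv

variable {N : ℕ} [NeZero N]

lemma blockEquiv_apply (d : ℤ) (i : Fin N) : blockEquiv N (d, i) = N * d + (i + 1) := by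
  simp only [blockEquiv, Equiv.trans_apply, Int.divModEquiv_symm_apply, Equiv.coe_addRight]
  ring

lemma blockEquiv_symm_eq {a d : ℤ} {i : Fin N} (h : a = N * d + (i + 1)) :
    (blockEquiv N).symm a = (d, i) := by
  rw [Equiv.symm_apply_eq, blockEquiv_apply, h]

lemma blockEquiv_symm_add_mul (a r : ℤ) :
    (blockEquiv N).symm (a + N * r) =
      (((blockEquiv N).symm a).1 + r, ((blockEquiv N).symm a).2) := by
  obtain ⟨⟨d, i⟩, rfl⟩ := (blockEquiv N).surjective a
  rw [Equiv.symm_apply_apply]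
  exact blockEquiv_symm_eq (by rw [blockEquiv_apply]; ring)

end blockEquiv

section coordinates

variable {N : ℕ}

def slNCqIdx.cartan (r : Fin (N - 1)) : slNCqIdx N := Sum.inr (Sum.inl r)

def slNCqIdx.kprime : slNCqIdx N := Sum.inr (Sum.inr 0)

def slNCqIdx.k : slNCqIdx N := Sum.inr (Sum.inr 1)

noncomputable def torusSingle (i j : Fin N) (m0 m1 : ℤ) : slNCqIdx N →₀ ℂ :=
  if h : ¬(i = j ∧ m0 = 0 ∧ m1 = 0) then Finsupp.single (Sum.inl ⟨(i, j, m0, m1), h⟩) 1 else 0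

lemma torusSingle_of_not {i j : Fin N} {m0 m1 : ℤ} (h : ¬(i = j ∧ m0 = 0 ∧ m1 = 0)) :
    torusSingle i j m0 m1 = Finsupp.single (Sum.inl ⟨(i, j, m0, m1), h⟩) 1 :=
  dif_pos h

/-- Chosen so that `cartanCoord i - cartanCoord j` are the `h̄_r`-coordinates of
`(E_{i+1,i+1} - E_{j+1,j+1})‾`. -/
noncomputable def cartanCoord (i : Fin N) : slNCqIdx N →₀ ℂ :=
  ∑ r : Fin (N - 1), if (i : ℕ) ≤ r then Finsupp.single (slNCqIdx.cartan r) 1 else 0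

lemma cartanCoord_sub_succ (r : Fin (N - 1)) :
    cartanCoord (⟨r, by omega⟩ : Fin N) - cartanCoord (⟨r + 1, by omega⟩ : Fin N) =
      Finsupp.single (slNCqIdx.cartan r) 1 := by
  rw [cartanCoord, cartanCoord, ← Finset.sum_sub_distrib,
    Finset.sum_eq_single r (fun x _ hx => ?_) (by simp)]
  · simp
  · have hrx : (r : ℕ) ≠ x := fun h => hx (Fin.ext h).symm
    have hiff : (r : ℕ) ≤ x ↔ (r : ℕ) + 1 ≤ x := by omega
    simp [hiff]

end coordinates

namespace GlInf

variable {g : Type*} [LieRing g] [LieAlgebra ℂ g] (Gi : GlInf g) (N : ℕ) [NeZero N]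

/-- `E_{Na+i,Nb+j} ↦ q^{-mb} e_{i,j}(m, a-b)`, the map suggested by relation (1). -/
noncomputable def torusCoord (q : ℂ) (m : ℤ) : g →ₗ[ℂ] (slNCqIdx N →₀ ℂ) :=
  Gi.bE.constr ℂ fun p =>
    q ^ (-(m * ((blockEquiv N).symm p.2).1)) • torusSingle ((blockEquiv N).symm p.1).2
      ((blockEquiv N).symm p.2).2 m (((blockEquiv N).symm p.1).1 - ((blockEquiv N).symm p.2).1)

/-- The degree-`0` diagonal coordinates, which `torusCoord` does not see:
`E_{Na+i,Na+i} ↦ cartanCoord i + a k'`. -/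
noncomputable def levelCoord : g →ₗ[ℂ] (slNCqIdx N →₀ ℂ) :=
  Gi.bE.constr ℂ fun p => if p.1 = p.2 then
    cartanCoord ((blockEquiv N).symm p.1).2 +
      (((blockEquiv N).symm p.1).1 : ℂ) • Finsupp.single slNCqIdx.kprime 1
    else 0

variable {N}

lemma torusCoord_E (q : ℂ) (m : ℤ) {a b d d' : ℤ} {i j : Fin N}
    (ha : (blockEquiv N).symm a = (d, i)) (hb : (blockEquiv N).symm b = (d', j)) :
    Gi.torusCoord N q m (Gi.E a b) = q ^ (-(m * d')) • torusSingle i j m (d - d') := by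
  simp [torusCoord, constr_E, ha, hb]

lemma torusCoord_zero_E_self (q : ℂ) (a : ℤ) : Gi.torusCoord N q 0 (Gi.E a a) = 0 := by
  simp [torusCoord, constr_E, torusSingle]

lemma levelCoord_E_self {a d : ℤ} {i : Fin N} (ha : (blockEquiv N).symm a = (d, i)) :
    Gi.levelCoord N (Gi.E a a) = cartanCoord i + (d : ℂ) • Finsupp.single slNCqIdx.kprime 1 := by
  simp [levelCoord, constr_E, ha]

lemma levelCoord_E_of_ne {a b : ℤ} (h : a ≠ b) : Gi.levelCoord N (Gi.E a b) = 0 := by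
  simp [levelCoord, constr_E, h]

lemma torusCoord_shift {q : ℂ} (hq : q ≠ 0) (m r : ℤ) (x : g) :
    Gi.torusCoord N q m (Gi.shift N r x) = q ^ (-(r * m)) • Gi.torusCoord N q m x := by
  refine LinearMap.congr_fun (f := Gi.torusCoord N q m ∘ₗ Gi.shift N r)
    (g := q ^ (-(r * m)) • Gi.torusCoord N q m) (Gi.linearMap_ext fun a b => ?_) x
  simp only [LinearMap.comp_apply, LinearMap.smul_apply, shift_E, torusCoord, constr_E,
    blockEquiv_symm_add_mul, smul_smul, ← zpow_add₀ hq]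
  congr 2 <;> ring

lemma levelCoord_shift (r : ℤ) (x : g) :
    Gi.levelCoord N (Gi.shift N r x) =
      Gi.levelCoord N x + ((r : ℂ) * Gi.trace x) • Finsupp.single slNCqIdx.kprime 1 := by
  have h := LinearMap.congr_fun (f := Gi.levelCoord N ∘ₗ Gi.shift N r)
    (g := Gi.levelCoord N + (r : ℂ) • (LinearMap.toSpanSingleton ℂ _
      (Finsupp.single slNCqIdx.kprime 1) ∘ₗ Gi.trace)) (Gi.linearMap_ext fun a b => ?_) x
  · simpa [mul_smul] using h
  · simp only [LinearMap.comp_apply, LinearMap.add_apply, LinearMap.smul_apply, shift_E,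
      levelCoord, constr_E, trace_E, blockEquiv_symm_add_mul, add_left_inj]
    split_ifs <;> simp [add_smul, add_assoc]

noncomputable def degreeCoord (q : ℂ) (N : ℕ) [NeZero N] (m : ℤ) :
    derivedSeries ℂ g 1 →ₗ[ℂ] (slNCqIdx N →₀ ℂ) :=
  (Gi.torusCoord N q m + if m = 0 then Gi.levelCoord N else 0) ∘ₗ
    (derivedSeries ℂ g 1).toSubmodule.subtype

lemma degreeCoord_apply (q : ℂ) (m : ℤ) (x : derivedSeries ℂ g 1) :
    Gi.degreeCoord q N m x = Gi.torusCoord N q m x + if m = 0 then Gi.levelCoord N x else 0 := by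
  rw [degreeCoord, LinearMap.comp_apply]
  split_ifs <;> rfl

end GlInf

section relations

open GlInf

variable {g : Type*} [LieRing g] [LieAlgebra ℂ g] {Gi : GlInf g} {q : ℂ} {N : ℕ}
  {C : Type*} [LieRing C] [LieAlgebra ℂ C]
  {B : derivedSeries ℂ g 1 → derivedSeries ℂ g 1 → ℂ}
  {σs : ℤ → derivedSeries ℂ g 1 → derivedSeries ℂ g 1}
  (Cov : CovZAlg q (derivedSeries ℂ g 1) B σs C)

lemma CovZAlg.atE_eq_of_coe_eq_shift (hq : q ≠ 0)
    (hshift : ∀ r x, (σs r x : g) = Gi.shift N r x) {x y : derivedSeries ℂ g 1} {r : ℤ}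
    (h : (y : g) = Gi.shift N r x) (m : ℤ) : Cov.atE m y = q ^ (-(r * m)) • Cov.atE m x := by
  rw [show y = σs r x from Subtype.ext (h.trans (hshift r x).symm), Cov.atE_sigma hq]

lemma CovZAlg.atE_E_eq_eElt (hq : q ≠ 0)
    (hshift : ∀ r x, (σs r x : g) = Gi.shift N r x) (i j : Fin N) (m0 m1 n1 : ℤ)
    (hne : ¬(i = j ∧ m1 = n1)) :
    Cov.atE m0 ⟨Gi.E ((N : ℤ) * m1 + (i.1 + 1)) ((N : ℤ) * n1 + (j.1 + 1)),
        Gi.offdiag_mem (shiftIdx_ne i.isLt j.isLt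
          (fun hc => hne ⟨Fin.ext hc.1, hc.2⟩))⟩
      = q ^ (-(m0 * n1)) • eElt Gi q N Cov i j m0 (m1 - n1) := by
  have hd : ¬(i = j ∧ m1 - n1 = 0) := fun h => hne ⟨h.1, by omega⟩
  rw [eElt, dif_neg hd, Cov.atE_eq_of_coe_eq_shift hq hshift (r := n1) ?_ m0, mul_comm]
  simp only [shift_E]
  congr 1 <;> ring

lemma CovZAlg.one_sub_smul_atE_diag (hq : q ≠ 0)
    (hshift : ∀ r x, (σs r x : g) = Gi.shift N r x) (m a b : ℤ) :
    (1 - q ^ (-m)) • Cov.atE m ⟨Gi.E a a - Gi.E b b, Gi.diff_mem _ _⟩ =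
      Cov.atE m ⟨Gi.E a a - Gi.E (a + N) (a + N), Gi.diff_mem _ _⟩ -
        Cov.atE m ⟨Gi.E b b - Gi.E (b + N) (b + N), Gi.diff_mem _ _⟩ := by
  have hshift1 : Cov.atE m ⟨Gi.E (a + N) (a + N) - Gi.E (b + N) (b + N), Gi.diff_mem _ _⟩ =
      q ^ (-(1 * m)) • Cov.atE m ⟨Gi.E a a - Gi.E b b, Gi.diff_mem _ _⟩ :=
    Cov.atE_eq_of_coe_eq_shift hq hshift (by simp [shift_E]) m
  rw [one_mul] at hshift1
  rw [sub_smul, one_smul, ← hshift1, ← Cov.atE_sub, ← Cov.atE_sub]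
  congr 1
  ext
  simp only [AddSubgroupClass.coe_sub]
  abel

lemma CovZAlg.atE_diag_eq_eElt (hq : q ≠ 0)
    (hshift : ∀ r x, (σs r x : g) = Gi.shift N r x) (hq' : ∀ n : ℕ, n ≠ 0 → q ^ n ≠ 1)
    (i j : Fin N) (m0 m1 n1 : ℤ) (hm0 : m0 ≠ 0) :
    Cov.atE m0 ⟨Gi.E ((N : ℤ) * m1 + (i.1 + 1)) ((N : ℤ) * m1 + (i.1 + 1)) -
        Gi.E ((N : ℤ) * n1 + (j.1 + 1)) ((N : ℤ) * n1 + (j.1 + 1)), Gi.diff_mem _ _⟩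
      = q ^ (-(m0 * m1)) • eElt Gi q N Cov i i m0 0
        - q ^ (-(m0 * n1)) • eElt Gi q N Cov j j m0 0 := by
  have hc : (1 : ℂ) - q ^ (-m0) ≠ 0 :=
    sub_ne_zero.mpr (zpow_ne_one_of_pow_ne_one hq' (neg_ne_zero.mpr hm0)).symm
  have hblock (d : ℤ) (k : Fin N) :
      Cov.atE m0 ⟨Gi.E (N * d + (k.1 + 1)) (N * d + (k.1 + 1)) -
        Gi.E (N * d + (k.1 + 1) + N) (N * d + (k.1 + 1) + N), Gi.diff_mem _ _⟩ =
      q ^ (-(m0 * d)) • Cov.atE m0 ⟨Gi.E (k.1 + 1) (k.1 + 1) -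
        Gi.E (k.1 + 1 + N) (k.1 + 1 + N), Gi.diff_mem _ _⟩ := by
    rw [Cov.atE_eq_of_coe_eq_shift hq hshift (r := d) ?_ m0, mul_comm]
    simp only [map_sub, shift_E]
    congr 2 <;> ring
  rw [← inv_smul_smul₀ hc (Cov.atE m0 _), Cov.one_sub_smul_atE_diag hq hshift, hblock, hblock,
    eElt, dif_pos ⟨rfl, rfl⟩, eElt, dif_pos ⟨rfl, rfl⟩, smul_sub, smul_comm _ (q ^ _),
    smul_comm _ (q ^ _)]

lemma CovZAlg.atE_zero_diag_add_N (hq : q ≠ 0)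
    (hshift : ∀ r x, (σs r x : g) = Gi.shift N r x) (a : ℤ) :
    Cov.atE 0 ⟨Gi.E (a + N) (a + N) - Gi.E a a, Gi.diff_mem _ _⟩ = kprimeElt Gi q N Cov := by
  have hinv : Cov.atE 0 ⟨Gi.E (a + N) (a + N) - Gi.E (1 + N) (1 + N), Gi.diff_mem _ _⟩ =
      Cov.atE 0 ⟨Gi.E a a - Gi.E 1 1, Gi.diff_mem _ _⟩ := by
    simpa using Cov.atE_eq_of_coe_eq_shift hq hshift (r := 1) (by simp [shift_E]) 0
  have hsplit : (⟨Gi.E (a + N) (a + N) - Gi.E a a, Gi.diff_mem _ _⟩ : derivedSeries ℂ g 1) =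
      ⟨Gi.E (a + N) (a + N) - Gi.E (1 + N) (1 + N), Gi.diff_mem _ _⟩ -
        ⟨Gi.E a a - Gi.E 1 1, Gi.diff_mem _ _⟩ +
        ⟨Gi.E (N + 1) (N + 1) - Gi.E 1 1, Gi.diff_mem _ _⟩ :=
    Subtype.ext (by
      simp only [AddSubgroupClass.coe_sub, AddMemClass.coe_add, add_comm (1 : ℤ)]
      abel)
  rw [hsplit, Cov.atE_add, Cov.atE_sub, hinv, sub_self, zero_add, kprimeElt]

lemma CovZAlg.atE_zero_diag_eq (hq : q ≠ 0)
    (hshift : ∀ r x, (σs r x : g) = Gi.shift N r x) (i j : Fin N) (m1 n1 : ℤ) :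
    Cov.atE 0 ⟨Gi.E ((N : ℤ) * m1 + (i.1 + 1)) ((N : ℤ) * m1 + (i.1 + 1)) -
        Gi.E ((N : ℤ) * n1 + (j.1 + 1)) ((N : ℤ) * n1 + (j.1 + 1)), Gi.diff_mem _ _⟩
      = Cov.atE 0 ⟨Gi.E ((i.1 : ℤ) + 1) ((i.1 : ℤ) + 1) -
          Gi.E ((j.1 : ℤ) + 1) ((j.1 : ℤ) + 1), Gi.diff_mem _ _⟩
        + ((m1 - n1 : ℤ) : ℂ) • kprimeElt Gi q N Cov := by
  set f : ℤ → C := fun a => Cov.atE 0 ⟨Gi.E a a - Gi.E 1 1, Gi.diff_mem _ _⟩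
  have hf (a b : ℤ) : Cov.atE 0 ⟨Gi.E a a - Gi.E b b, Gi.diff_mem _ _⟩ = f a - f b := by
    rw [← Cov.atE_sub]
    congr 1
    ext
    simp
  have hstep (a : ℤ) : f (a + N) - f a = kprimeElt Gi q N Cov := by
    rw [← hf]
    exact Cov.atE_zero_diag_add_N hq hshift a
  rw [hf, hf, add_comm ((N : ℤ) * m1), add_comm ((N : ℤ) * n1),
    add_mul_eq_add_zsmul_of_sub_eq hstep, add_mul_eq_add_zsmul_of_sub_eq hstep,
    Int.cast_smul_eq_zsmul, sub_zsmul]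
  abel

end relations

section independence

open GlInf

variable {g : Type*} [LieRing g] [LieAlgebra ℂ g] {Gi : GlInf g} {q : ℂ} {N : ℕ} [NeZero N]
  {C : Type*} [LieRing C] [LieAlgebra ℂ C]
  {B : derivedSeries ℂ g 1 → derivedSeries ℂ g 1 → ℂ}
  {σs : ℤ → derivedSeries ℂ g 1 → derivedSeries ℂ g 1}
  (Cov : CovZAlg q (derivedSeries ℂ g 1) B σs C)

lemma GlInf.degreeCoord_invariant (hq : q ≠ 0)
    (hshift : ∀ r x, (σs r x : g) = Gi.shift N r x) (r m : ℤ) (x : derivedSeries ℂ g 1) :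
    Gi.degreeCoord q N m (q ^ (r * m) • σs r x) = Gi.degreeCoord q N m x := by
  have htr := Gi.trace_eq_zero_of_mem x.2
  simp only [degreeCoord_apply, map_smul, hshift, torusCoord_shift _ hq]
  split_ifs with hm
  · subst hm; simp [levelCoord_shift, htr]
  · simp [smul_smul, mul_inv_cancel₀ (zpow_ne_zero _ hq)]

noncomputable def CovZAlg.slCoord (hq : q ≠ 0) (hshift : ∀ r x, (σs r x : g) = Gi.shift N r x) :
    C →ₗ[ℂ] (slNCqIdx N →₀ ℂ) :=
  Cov.desc (Gi.degreeCoord q N) (Finsupp.single slNCqIdx.k 1) (degreeCoord_invariant hq hshift)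

section

variable (hq : q ≠ 0) (hshift : ∀ r x, (σs r x : g) = Gi.shift N r x)

lemma CovZAlg.slCoord_atE (m : ℤ) (x : derivedSeries ℂ g 1) :
    Cov.slCoord hq hshift (Cov.atE m x) =
      Gi.torusCoord N q m x + if m = 0 then Gi.levelCoord N x else 0 := by
  simp [slCoord, degreeCoord_apply]

lemma CovZAlg.slCoord_eElt (hq' : ∀ n : ℕ, n ≠ 0 → q ^ n ≠ 1) (i j : Fin N) (m0 m1 : ℤ)
    (h : ¬(i = j ∧ m0 = 0 ∧ m1 = 0)) :
    Cov.slCoord hq hshift (eElt Gi q N Cov i j m0 m1) =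
      Finsupp.single (Sum.inl ⟨(i, j, m0, m1), h⟩) 1 := by
  rw [← torusSingle_of_not h, eElt]
  split_ifs with hd
  · obtain ⟨rfl, rfl⟩ := hd
    have hm0 : m0 ≠ 0 := fun hm => h ⟨rfl, hm, rfl⟩
    have hc : (1 : ℂ) - q ^ (-m0) ≠ 0 :=
      sub_ne_zero.mpr (zpow_ne_one_of_pow_ne_one hq' (neg_ne_zero.mpr hm0)).symm
    rw [map_smul, slCoord_atE, if_neg hm0, add_zero, inv_smul_eq_iff₀ hc]
    simp only [map_sub]
    rw [torusCoord_E _ _ _ (blockEquiv_symm_eq (d := 0) (by ring))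
        (blockEquiv_symm_eq (d := 0) (by ring)),
      torusCoord_E _ _ _ (blockEquiv_symm_eq (d := 1) (by ring))
        (blockEquiv_symm_eq (d := 1) (by ring))]
    simp [sub_smul]
  · rw [slCoord_atE, levelCoord_E_of_ne, torusCoord_E _ _ _ (blockEquiv_symm_eq rfl)
      (blockEquiv_symm_eq (d := 0) (by ring))]
    · simp
    · simpa using shiftIdx_ne i.isLt j.isLt (m1 := m1) (n1 := 0)
        fun hc => hd ⟨Fin.ext hc.1, hc.2⟩

lemma CovZAlg.slCoord_cartan (r : Fin (N - 1)) :
    Cov.slCoord hq hshift (Cov.atE 0 ⟨Gi.E ((r.1 : ℤ) + 1) ((r.1 : ℤ) + 1) -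
      Gi.E ((r.1 : ℤ) + 2) ((r.1 : ℤ) + 2), Gi.diff_mem _ _⟩) =
      Finsupp.single (slNCqIdx.cartan r) 1 := by
  rw [slCoord_atE, if_pos rfl]
  simp only [map_sub, torusCoord_zero_E_self, sub_zero, zero_add,
    Gi.levelCoord_E_self (a := r + 1)
      (blockEquiv_symm_eq (N := N) (d := 0) (i := ⟨r, by omega⟩) (by simp)),
    Gi.levelCoord_E_self (a := r + 2)
      (blockEquiv_symm_eq (N := N) (d := 0) (i := ⟨r + 1, by omega⟩) (by push_cast; ring))]
  simpa using cartanCoord_sub_succ r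

lemma CovZAlg.slCoord_kprimeElt :
    Cov.slCoord hq hshift (kprimeElt Gi q N Cov) = Finsupp.single slNCqIdx.kprime 1 := by
  rw [kprimeElt, slCoord_atE, if_pos rfl]
  simp only [map_sub, torusCoord_zero_E_self, sub_zero, zero_add,
    Gi.levelCoord_E_self (a := N + 1) (blockEquiv_symm_eq (N := N) (d := 1) (i := 0) (by simp)),
    Gi.levelCoord_E_self (a := 1) (blockEquiv_symm_eq (N := N) (d := 0) (i := 0) (by simp))]
  simp

lemma CovZAlg.slCoord_slCovFam (hq' : ∀ n : ℕ, n ≠ 0 → q ^ n ≠ 1) (idx : slNCqIdx N) :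
    Cov.slCoord hq hshift (slCovFam Gi q N Cov idx) = Finsupp.single idx 1 := by
  rcases idx with ⟨⟨i, j, m0, m1⟩, h⟩ | r | t
  · exact Cov.slCoord_eElt hq hshift hq' i j m0 m1 h
  · exact Cov.slCoord_cartan hq hshift r
  · fin_cases t
    · exact Cov.slCoord_kprimeElt hq hshift
    · exact Cov.desc_k _ _ _

end

lemma CovZAlg.linearIndependent_slCovFam (hq : q ≠ 0)
    (hshift : ∀ r x, (σs r x : g) = Gi.shift N r x) (hq' : ∀ n : ℕ, n ≠ 0 → q ^ n ≠ 1) :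
    LinearIndependent ℂ (slCovFam Gi q N Cov) := by
  refine LinearIndependent.of_comp (Cov.slCoord hq hshift) ?_
  convert Finsupp.linearIndependent_single_one ℂ (slNCqIdx N) using 1
  exact funext (Cov.slCoord_slCovFam hq hshift hq')

end independence

section span

open GlInf

variable {g : Type*} [LieRing g] [LieAlgebra ℂ g] {Gi : GlInf g} {q : ℂ} {N : ℕ}
  {C : Type*} [LieRing C] [LieAlgebra ℂ C]
  {B : derivedSeries ℂ g 1 → derivedSeries ℂ g 1 → ℂ}
  {σs : ℤ → derivedSeries ℂ g 1 → derivedSeries ℂ g 1}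
  (Cov : CovZAlg q (derivedSeries ℂ g 1) B σs C)

lemma CovZAlg.atE_zero_cartan_mem_span (i j : Fin N) :
    Cov.atE 0 ⟨Gi.E ((i.1 : ℤ) + 1) ((i.1 : ℤ) + 1) - Gi.E ((j.1 : ℤ) + 1) ((j.1 : ℤ) + 1),
      Gi.diff_mem _ _⟩ ∈ Submodule.span ℂ (Set.range (slCovFam Gi q N Cov)) := by
  set v : ℕ → C := fun c =>
    Cov.atE 0 ⟨Gi.E ((c : ℤ) + 1) ((c : ℤ) + 1) - Gi.E 1 1, Gi.diff_mem _ _⟩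
  have hv (a b : ℤ) (c d : ℕ) (ha : a = c + 1) (hb : b = d + 1) :
      Cov.atE 0 ⟨Gi.E a a - Gi.E b b, Gi.diff_mem _ _⟩ = v c - v d := by
    subst ha hb
    rw [← Cov.atE_sub]
    congr 1
    ext
    simp
  rw [hv _ _ i j rfl rfl]
  refine Submodule.sub_mem_of_forall_sub_succ_mem _ (fun c hc => ?_) i.isLt j.isLt
  rw [← hv (c + 1) (c + 2) c (c + 1) rfl (by push_cast; ring)]
  exact Submodule.subset_span ⟨slNCqIdx.cartan ⟨c, by omega⟩, rfl⟩

variable [NeZero N]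

lemma CovZAlg.atE_offdiag_mem_span (hq : q ≠ 0)
    (hshift : ∀ r x, (σs r x : g) = Gi.shift N r x) (m : ℤ) {y : derivedSeries ℂ g 1}
    {a b : ℤ} (hab : a ≠ b) (hy : (y : g) = Gi.E a b) :
    Cov.atE m y ∈ Submodule.span ℂ (Set.range (slCovFam Gi q N Cov)) := by
  obtain ⟨⟨m1, i⟩, rfl⟩ := (blockEquiv N).surjective a
  obtain ⟨⟨n1, j⟩, rfl⟩ := (blockEquiv N).surjective b
  have hne : ¬(i = j ∧ m1 = n1) := by
    rintro ⟨rfl, rfl⟩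
    exact hab rfl
  rw [blockEquiv_apply, blockEquiv_apply] at hy
  rw [show y = ⟨_, Gi.offdiag_mem (shiftIdx_ne i.isLt j.isLt
      (fun hc => hne ⟨Fin.ext hc.1, hc.2⟩))⟩ from Subtype.ext hy,
    Cov.atE_E_eq_eElt hq hshift i j m m1 n1 hne]
  exact Submodule.smul_mem _ _ (Submodule.subset_span
    ⟨Sum.inl ⟨(i, j, m, m1 - n1), fun h => hne ⟨h.1, sub_eq_zero.mp h.2.2⟩⟩, rfl⟩)

lemma CovZAlg.atE_diag_mem_span (hq : q ≠ 0)
    (hshift : ∀ r x, (σs r x : g) = Gi.shift N r x) (hq' : ∀ n : ℕ, n ≠ 0 → q ^ n ≠ 1) (m : ℤ)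
    {y : derivedSeries ℂ g 1} {a b : ℤ} (hy : (y : g) = Gi.E a a - Gi.E b b) :
    Cov.atE m y ∈ Submodule.span ℂ (Set.range (slCovFam Gi q N Cov)) := by
  obtain ⟨⟨m1, i⟩, rfl⟩ := (blockEquiv N).surjective a
  obtain ⟨⟨n1, j⟩, rfl⟩ := (blockEquiv N).surjective b
  rw [blockEquiv_apply, blockEquiv_apply] at hy
  rw [show y = ⟨_, Gi.diff_mem _ _⟩ from Subtype.ext hy]
  rcases eq_or_ne m 0 with rfl | hm
  · rw [Cov.atE_zero_diag_eq hq hshift]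
    exact Submodule.add_mem _ (Cov.atE_zero_cartan_mem_span i j)
      (Submodule.smul_mem _ _ (Submodule.subset_span ⟨slNCqIdx.kprime, rfl⟩))
  · rw [Cov.atE_diag_eq_eElt hq hshift hq' i j m m1 n1 hm]
    have hmem (k : Fin N) : eElt Gi q N Cov k k m 0 ∈
        Submodule.span ℂ (Set.range (slCovFam Gi q N Cov)) :=
      Submodule.subset_span ⟨Sum.inl ⟨(k, k, m, 0), fun h => hm h.2.1⟩, rfl⟩
    exact Submodule.sub_mem _ (Submodule.smul_mem _ _ (hmem i)) (Submodule.smul_mem _ _ (hmem j))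

lemma CovZAlg.span_slCovFam (hq : q ≠ 0)
    (hshift : ∀ r x, (σs r x : g) = Gi.shift N r x) (hq' : ∀ n : ℕ, n ≠ 0 → q ^ n ≠ 1) :
    Submodule.span ℂ (Set.range (slCovFam Gi q N Cov)) = ⊤ := by
  rw [eq_top_iff, ← Cov.spans, Submodule.span_le]
  rintro _ (hk | ⟨m, x, rfl⟩)
  · rw [Set.mem_singleton_iff.mp hk]
    exact Submodule.subset_span ⟨slNCqIdx.k, rfl⟩
  suffices Submodule.span ℂ ((derivedSeries ℂ g 1).toSubmodule.subtype ⁻¹' Gi.slGens) ≤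
      (Submodule.span ℂ (Set.range (slCovFam Gi q N Cov))).comap (Cov.atEₗ m) from
    this (Gi.span_preimage_slGens.symm ▸ Submodule.mem_top)
  rw [Submodule.span_le]
  rintro y (⟨a, b, hab, hy⟩ | ⟨a, b, hy⟩)
  exacts [Cov.atE_offdiag_mem_span hq hshift m hab hy, Cov.atE_diag_mem_span hq hshift hq' m hy]

end span

theorem slInfZ_relations_and_basis_general (q : ℂ) (hq : q ≠ 0)
    (hq' : ∀ n : ℕ, n ≠ 0 → q ^ n ≠ 1) (N : ℕ) (hN : 2 ≤ N)
    (g : Type*) [LieRing g] [LieAlgebra ℂ g] (Gi : GlInf g)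
    (σg : ℤ → g → g) (hσ_lin : ∀ r : ℤ, IsLinearMap ℂ (σg r))
    (hσ : ∀ r m n : ℤ, σg r (Gi.E m n) = Gi.E (m + N * r) (n + N * r))
    (σs : ℤ → ↥(LieAlgebra.derivedSeries ℂ g 1) → ↥(LieAlgebra.derivedSeries ℂ g 1))
    (hσs : ∀ (r : ℤ) (x : ↥(LieAlgebra.derivedSeries ℂ g 1)), (σs r x : g) = σg r (x : g))
    (B : ↥(LieAlgebra.derivedSeries ℂ g 1) → ↥(LieAlgebra.derivedSeries ℂ g 1) → ℂ)
    (C : Type*) [LieRing C] [LieAlgebra ℂ C]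
    (Cov : CovZAlg q ↥(LieAlgebra.derivedSeries ℂ g 1) B σs C) :
    (∀ (i j : Fin N) (m0 m1 n1 : ℤ) (hne : ¬(i = j ∧ m1 = n1)),
      Cov.atE m0 ⟨Gi.E ((N : ℤ) * m1 + (i.1 + 1)) ((N : ℤ) * n1 + (j.1 + 1)),
          Gi.offdiag_mem (shiftIdx_ne i.isLt j.isLt
            (fun hc => hne ⟨Fin.ext hc.1, hc.2⟩))⟩
        = q ^ (-(m0 * n1)) • eElt Gi q N Cov i j m0 (m1 - n1)) ∧
    (∀ (i j : Fin N) (m0 m1 n1 : ℤ), ¬(i = j ∧ m1 = n1) → m0 ≠ 0 →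
      Cov.atE m0 ⟨Gi.E ((N : ℤ) * m1 + (i.1 + 1)) ((N : ℤ) * m1 + (i.1 + 1)) -
          Gi.E ((N : ℤ) * n1 + (j.1 + 1)) ((N : ℤ) * n1 + (j.1 + 1)), Gi.diff_mem _ _⟩
        = q ^ (-(m0 * m1)) • eElt Gi q N Cov i i m0 0
          - q ^ (-(m0 * n1)) • eElt Gi q N Cov j j m0 0) ∧
    (∀ (i j : Fin N) (m1 n1 : ℤ), ¬(i = j ∧ m1 = n1) →
      Cov.atE 0 ⟨Gi.E ((N : ℤ) * m1 + (i.1 + 1)) ((N : ℤ) * m1 + (i.1 + 1)) -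
          Gi.E ((N : ℤ) * n1 + (j.1 + 1)) ((N : ℤ) * n1 + (j.1 + 1)), Gi.diff_mem _ _⟩
        = Cov.atE 0 ⟨Gi.E ((i.1 : ℤ) + 1) ((i.1 : ℤ) + 1) -
            Gi.E ((j.1 : ℤ) + 1) ((j.1 : ℤ) + 1), Gi.diff_mem _ _⟩
          + ((m1 - n1 : ℤ) : ℂ) • kprimeElt Gi q N Cov) ∧
    (LinearIndependent ℂ (slCovFam Gi q N Cov) ∧
      Submodule.span ℂ (Set.range (slCovFam Gi q N Cov)) = ⊤) := by
  have : NeZero N := ⟨by omega⟩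
  have hshift (r : ℤ) (x : derivedSeries ℂ g 1) : (σs r x : g) = Gi.shift N r x :=
    (hσs r x).trans (Gi.apply_eq_shift hσ_lin hσ r x)
  exact ⟨Cov.atE_E_eq_eElt hq hshift,
    fun i j m0 m1 n1 _ hm0 => Cov.atE_diag_eq_eElt hq hshift hq' i j m0 m1 n1 hm0,
    fun i j m1 n1 _ => Cov.atE_zero_diag_eq hq hshift i j m1 n1,
    Cov.linearIndependent_slCovFam hq hshift hq', Cov.span_slCovFam hq hshift hq'⟩

/-- relations and a basis for `ŝl_∞[ℤ]`:
(1) `(E_{Nm₁+i,Nn₁+j} ⊗ t^{m₀})‾ = q^{-m₀n₁} e_{i,j}(m₀, m₁-n₁)` whenever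
`(i,m₁) ≠ (j,n₁)`;
(2) `((E_{Nm₁+i,Nm₁+i} - E_{Nn₁+j,Nn₁+j}) ⊗ t^{m₀})‾` equals
`q^{-m₀m₁} e_{i,i}(m₀,0) - q^{-m₀n₁} e_{j,j}(m₀,0)` when `m₀ ≠ 0` and equals
`(E_{i,i}-E_{j,j})‾ + (m₁-n₁)k'` when `m₀ = 0`;
(3) the `e_{i,j}(m₀,m₁)` with `(i-j,m₀,m₁) ≠ (0,0,0)`, the `h̄_r` (`1 ≤ r ≤ N-1`),
`k'` and `k` form a `ℂ`-basis of `ŝl_∞[ℤ]`. -/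
theorem slInfZ_relations_and_basis (q : ℂ) (hq : q ≠ 0)
    (hq' : ∀ n : ℕ, n ≠ 0 → q ^ n ≠ 1) (N : ℕ) (hN : 2 ≤ N)
    (g : Type*) [LieRing g] [LieAlgebra ℂ g] (Gi : GlInf g)
    (σg : ℤ → g → g) (hσ_lin : ∀ r : ℤ, IsLinearMap ℂ (σg r))
    (hσ : ∀ r m n : ℤ, σg r (Gi.E m n) = Gi.E (m + N * r) (n + N * r))
    (σs : ℤ → ↥(LieAlgebra.derivedSeries ℂ g 1) → ↥(LieAlgebra.derivedSeries ℂ g 1))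
    (hσs : ∀ (r : ℤ) (x : ↥(LieAlgebra.derivedSeries ℂ g 1)), (σs r x : g) = σg r (x : g))
    (B : ↥(LieAlgebra.derivedSeries ℂ g 1) → ↥(LieAlgebra.derivedSeries ℂ g 1) → ℂ)
    (hB : ∀ x y : ↥(LieAlgebra.derivedSeries ℂ g 1), B x y = Gi.form (x : g) (y : g))
    (C : Type*) [LieRing C] [LieAlgebra ℂ C]
    (Cov : CovZAlg q ↥(LieAlgebra.derivedSeries ℂ g 1) B σs C) :
    (∀ (i j : Fin N) (m0 m1 n1 : ℤ) (hne : ¬(i = j ∧ m1 = n1)),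
      Cov.atE m0 ⟨Gi.E ((N : ℤ) * m1 + (i.1 + 1)) ((N : ℤ) * n1 + (j.1 + 1)),
          Gi.offdiag_mem (shiftIdx_ne i.isLt j.isLt
            (fun hc => hne ⟨Fin.ext hc.1, hc.2⟩))⟩
        = q ^ (-(m0 * n1)) • eElt Gi q N Cov i j m0 (m1 - n1)) ∧
    (∀ (i j : Fin N) (m0 m1 n1 : ℤ), ¬(i = j ∧ m1 = n1) → m0 ≠ 0 →
      Cov.atE m0 ⟨Gi.E ((N : ℤ) * m1 + (i.1 + 1)) ((N : ℤ) * m1 + (i.1 + 1)) -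
          Gi.E ((N : ℤ) * n1 + (j.1 + 1)) ((N : ℤ) * n1 + (j.1 + 1)), Gi.diff_mem _ _⟩
        = q ^ (-(m0 * m1)) • eElt Gi q N Cov i i m0 0
          - q ^ (-(m0 * n1)) • eElt Gi q N Cov j j m0 0) ∧
    (∀ (i j : Fin N) (m1 n1 : ℤ), ¬(i = j ∧ m1 = n1) →
      Cov.atE 0 ⟨Gi.E ((N : ℤ) * m1 + (i.1 + 1)) ((N : ℤ) * m1 + (i.1 + 1)) -
          Gi.E ((N : ℤ) * n1 + (j.1 + 1)) ((N : ℤ) * n1 + (j.1 + 1)), Gi.diff_mem _ _⟩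
        = Cov.atE 0 ⟨Gi.E ((i.1 : ℤ) + 1) ((i.1 : ℤ) + 1) -
            Gi.E ((j.1 : ℤ) + 1) ((j.1 : ℤ) + 1), Gi.diff_mem _ _⟩
          + ((m1 - n1 : ℤ) : ℂ) • kprimeElt Gi q N Cov) ∧
    (LinearIndependent ℂ (slCovFam Gi q N Cov) ∧
      Submodule.span ℂ (Set.range (slCovFam Gi q N Cov)) = ⊤) :=
  slInfZ_relations_and_basis_general q hq hq' N hN g Gi σg hσ_lin hσ σs hσs B C Cov
end

section
/- For any 1 ≤ i < j ≤ N and m ∈ ℤ, the subspace Â_{i,j}(m) of ŝl_N(ℂ_q) spanned by the elements E_{i,j}t₀^{n}t₁^{m}, E_{j,i}t₀^{n}t₁^{−m}, q^{mn}E_{i,i}t₀^{n} − E_{j,j}t₀^{n} + mδ_{n,0}k₁, and k₀ (n ∈ ℤ) is a Lie subalgebra of ŝl_N(ℂ_q), and the assignment q^{mn}E_{i,j}t₀^{n}t₁^{m} ↦ e⊗t^n, E_{j,i}t₀^{n}t₁^{−m} ↦ f⊗t^n, q^{mn}E_{i,i}t₀^{n} − E_{j,j}t₀^{n} + mδ_{n,0}k₁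 ↦ h⊗t^n, k₀ ↦ k (n ∈ ℤ) extends to a Lie algebra isomorphism from Â_{i,j}(m) onto ŝl₂. -/
/-- The canonical basis family of `ŝl_N(ℂ_q)`. -/
def slNCqFam {N : ℕ} {L : Type*} [AddCommGroup L]
    (E : Fin N → Fin N → ℤ → ℤ → L) (k0 k1 : L) : slNCqIdx N → L :=
  Sum.elim (fun p => E p.1.1 p.1.2.1 p.1.2.2.1 p.1.2.2.2)
    (Sum.elim
      (fun r => E ⟨r.1, by have := r.isLt; omega⟩ ⟨r.1, by have := r.isLt; omega⟩ 0 0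
        - E ⟨r.1 + 1, by have := r.isLt; omega⟩ ⟨r.1 + 1, by have := r.isLt; omega⟩ 0 0)
      ![k0, k1])

/-- An incarnation of the Lie algebra `ŝl_N(ℂ_q) = sl_N(ℂ_q) ⊕ ℂk₀ ⊕ ℂk₁`:
a complex Lie algebra with central elements `k₀, k₁` and elements `E i j m₀ m₁`
(representing `E_{i,j} t₀^{m₀} t₁^{m₁}`, with the convention that `E i i 0 0` denotes
the traceless projection `E_{i,i} - (1/N)·I_N`, so that
`E i i 0 0 - E j j 0 0 = E_{i,i} - E_{j,j}`), satisfying the quantum torus commutation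
relations; the elements `E_{i,j}t₀^{m₀}t₁^{m₁}` with `(i-j,m₀,m₁) ≠ (0,0,0)` together with
`E_{r,r}-E_{r+1,r+1}` (`1 ≤ r ≤ N-1`), `k₀` and `k₁` form a basis. -/
structure SlNCq (q : ℂ) (N : ℕ) (L : Type*) [LieRing L] [LieAlgebra ℂ L] where
  E : Fin N → Fin N → ℤ → ℤ → L
  k0 : L
  k1 : L
  k0_central : ∀ x : L, ⁅k0, x⁆ = 0
  k1_central : ∀ x : L, ⁅k1, x⁆ = 0
  traceless : (∑ i : Fin N, E i i 0 0) = 0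
  bracket_E : ∀ (i j k l : Fin N) (m0 m1 n0 n1 : ℤ),
    ⁅E i j m0 m1, E k l n0 n1⁆ =
      ((if j = k then q ^ (m1 * n0) • E i l (m0 + n0) (m1 + n1) else 0)
        - (if i = l then q ^ (n1 * m0) • E k j (m0 + n0) (m1 + n1) else 0))
      + (if j = k ∧ i = l ∧ m0 + n0 = 0 ∧ m1 + n1 = 0
          then q ^ (m1 * n0) • ((m0 : ℂ) • k0 + (m1 : ℂ) • k1) else 0)
  basis_indep : LinearIndependent ℂ (slNCqFam E k0 k1)
  basis_span : Submodule.span ℂ (Set.range (slNCqFam E k0 k1)) = ⊤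

section Modules

variable {q : ℂ} {N : ℕ} {L : Type*} [LieRing L] [LieAlgebra ℂ L]

/-- A module for `ŝl_N(ℂ_q)` is *restricted* if for every vector `w` and all `i, j, m₁`,
`(E_{i,j} t₀^{m₀} t₁^{m₁}) w = 0` for all sufficiently large `m₀`. -/
def SlNCq.IsRestricted (S : SlNCq q N L) (W : Type*) [AddCommGroup W]
    [LieRingModule L W] : Prop :=
  ∀ (w : W) (i j : Fin N) (m1 : ℤ), ∃ M : ℤ, ∀ m0 : ℤ, M ≤ m0 → ⁅S.E i j m0 m1, w⁆ = 0

/-- A module for `ŝl_N(ℂ_q)` is *integrable* if every `E_{i,j} t₀^{m₀} t₁^{m₁}` with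
`i ≠ j` acts locally nilpotently. -/
def SlNCq.IsIntegrable (S : SlNCq q N L) (W : Type*) [AddCommGroup W]
    [LieRingModule L W] : Prop :=
  ∀ (i j : Fin N), i ≠ j → ∀ (m0 m1 : ℤ) (w : W),
    ∃ n : ℕ, ((fun v : W => ⁅S.E i j m0 m1, v⁆)^[n]) w = 0

/-- A module has *level* `ℓ` if `k₀` acts as the scalar `ℓ`. -/
def SlNCq.HasLevel (S : SlNCq q N L) (W : Type*) [AddCommGroup W] [Module ℂ W]
    [LieRingModule L W] (ℓ : ℂ) : Prop :=
  ∀ w : W, ⁅S.k0, w⁆ = ℓ • w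

end Modules

/-- An incarnation of the affine Lie algebra `ŝl₂ = (sl₂ ⊗ ℂ[t,t⁻¹]) ⊕ ℂk`: a complex Lie
algebra with basis `e ⊗ tⁿ, f ⊗ tⁿ, h ⊗ tⁿ (n ∈ ℤ)` and `k`, with `k` central and the
standard affine `sl₂` commutation relations (trace form `tr(ef)=1`, `tr(h²)=2`). -/
structure AffineSl2 (A : Type*) [LieRing A] [LieAlgebra ℂ A] where
  e : ℤ → A
  f : ℤ → A
  h : ℤ → A
  k : A
  k_central : ∀ x : A, ⁅k, x⁆ = 0
  bracket_ef : ∀ m n : ℤ, ⁅e m, f n⁆ = h (m + n) + (if m + n = 0 then (m : ℂ) else 0) • k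
  bracket_he : ∀ m n : ℤ, ⁅h m, e n⁆ = (2 : ℂ) • e (m + n)
  bracket_hf : ∀ m n : ℤ, ⁅h m, f n⁆ = (-2 : ℂ) • f (m + n)
  bracket_hh : ∀ m n : ℤ, ⁅h m, h n⁆ = (if m + n = 0 then (2 * m : ℂ) else 0) • k
  bracket_ee : ∀ m n : ℤ, ⁅e m, e n⁆ = 0
  bracket_ff : ∀ m n : ℤ, ⁅f m, f n⁆ = 0
  basis_indep : LinearIndependent ℂ
    (Sum.elim (Sum.elim e f) (Sum.elim h ![k]) :
      ((ℤ ⊕ ℤ) ⊕ (ℤ ⊕ Fin 1)) → A)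
  basis_span : Submodule.span ℂ
    (Set.range (Sum.elim (Sum.elim e f) (Sum.elim h ![k]) :
      ((ℤ ⊕ ℤ) ⊕ (ℤ ⊕ Fin 1)) → A)) = ⊤

/-- The spanning set of the subalgebra `Â_{i,j}(m)` of `ŝl_N(ℂ_q)`. -/
def hatA {q : ℂ} {N : ℕ} {L : Type*} [LieRing L] [LieAlgebra ℂ L]
    (S : SlNCq q N L) (i j : Fin N) (m : ℤ) : Set L :=
  {x | (∃ n : ℤ, x = S.E i j n m) ∨ (∃ n : ℤ, x = S.E j i n (-m)) ∨
    (∃ n : ℤ, x = q ^ (m * n) • S.E i i n 0 - S.E j j n 0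
      + (if n = 0 then (m : ℂ) • S.k1 else 0)) ∨ x = S.k0}


/-!
The elements `eₙ = q^{mn} E_{i,j}t₀ⁿt₁^m`, `fₙ = E_{j,i}t₀ⁿt₁^{-m}`,
`hₙ = q^{mn}E_{i,i}t₀ⁿ - E_{j,j}t₀ⁿ + mδ_{n,0}k₁` and `k₀` satisfy the defining commutation
relations of `ŝl₂`: the twist `q^{mn}` absorbs the powers of `q` produced by the quantum torus
product, and the cocycle `m k₁` appearing in `[e₀, f₀]` is absorbed by the `mδ_{n,0}k₁` term of
`h₀`. Since `ŝl₂` has a basis, the assignment extends to a Lie algebra morphism `ŝl₂ → ŝl_N(ℂ_q)`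
whose range is the span `Â_{i,j}(m)`, which is therefore a subalgebra. The morphism is injective
because it has a linear left inverse, defined on the basis of `ŝl_N(ℂ_q)`.
-/

theorem Module.Basis.map_lie_of_map_lie_basis {R ι A L : Type*} [CommRing R]
    [LieRing A] [LieAlgebra R A] [LieRing L] [LieAlgebra R L]
    (b : Module.Basis ι R A) (φ : A →ₗ[R] L)
    (h : ∀ p p', φ ⁅b p, b p'⁆ = ⁅φ (b p), φ (b p')⁆) (x y : A) :
    φ ⁅x, y⁆ = ⁅φ x, φ y⁆ := by
  have key : (LieModule.toEnd R A A : A →ₗ[R] A →ₗ[R] A).compr₂ φ =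
      ((LieModule.toEnd R L L : L →ₗ[R] L →ₗ[R] L) ∘ₗ φ).compl₂ φ :=
    b.ext fun p => b.ext fun p' => h p p'
  exact LinearMap.congr_fun₂ key x y

/-- The commutation relations of `AffineSl2`, without its basis conditions. -/
structure AffineSl2Family (L : Type*) [LieRing L] [LieAlgebra ℂ L] where
  e : ℤ → L
  f : ℤ → L
  h : ℤ → L
  k : L
  k_central : ∀ x : L, ⁅k, x⁆ = 0
  bracket_ef : ∀ m n : ℤ,
    ⁅e m, f n⁆ = h (m + n) + (if m + n = 0 then (m : ℂ) else 0) • k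
  bracket_he : ∀ m n : ℤ, ⁅h m, e n⁆ = (2 : ℂ) • e (m + n)
  bracket_hf : ∀ m n : ℤ, ⁅h m, f n⁆ = (-2 : ℂ) • f (m + n)
  bracket_hh : ∀ m n : ℤ, ⁅h m, h n⁆ = (if m + n = 0 then (2 * m : ℂ) else 0) • k
  bracket_ee : ∀ m n : ℤ, ⁅e m, e n⁆ = 0
  bracket_ff : ∀ m n : ℤ, ⁅f m, f n⁆ = 0

namespace AffineSl2Family

variable {L : Type*} [LieRing L] [LieAlgebra ℂ L] (F : AffineSl2Family L)

def toFun : (ℤ ⊕ ℤ) ⊕ (ℤ ⊕ Fin 1) → L :=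
  Sum.elim (Sum.elim F.e F.f) (Sum.elim F.h ![F.k])

theorem lie_k (x : L) : ⁅x, F.k⁆ = 0 := by rw [← lie_skew, F.k_central, neg_zero]

theorem bracket_fe (m n : ℤ) :
    ⁅F.f m, F.e n⁆ = -(F.h (n + m) + (if n + m = 0 then (n : ℂ) else 0) • F.k) := by
  rw [← lie_skew, F.bracket_ef]

theorem bracket_eh (m n : ℤ) : ⁅F.e m, F.h n⁆ = -((2 : ℂ) • F.e (n + m)) := by
  rw [← lie_skew, F.bracket_he]

theorem bracket_fh (m n : ℤ) : ⁅F.f m, F.h n⁆ = -((-2 : ℂ) • F.f (n + m)) := by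
  rw [← lie_skew, F.bracket_hf]

theorem map_lie_toFun {A : Type*} [LieRing A] [LieAlgebra ℂ A] (G : AffineSl2Family A)
    (φ : A →ₗ[ℂ] L) (he : ∀ n, φ (G.e n) = F.e n) (hf : ∀ n, φ (G.f n) = F.f n)
    (hh : ∀ n, φ (G.h n) = F.h n) (hk : φ G.k = F.k) (p p') :
    φ ⁅G.toFun p, G.toFun p'⁆ = ⁅φ (G.toFun p), φ (G.toFun p')⁆ := by
  rcases p with (n | n) | (n | c) <;> rcases p' with (n' | n') | (n' | c') <;>
    simp [toFun, G.bracket_ef, F.bracket_ef, bracket_fe, bracket_eh, bracket_fh, G.bracket_he,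
      F.bracket_he, G.bracket_hf, F.bracket_hf, G.bracket_hh, F.bracket_hh, G.bracket_ee,
      F.bracket_ee, G.bracket_ff, F.bracket_ff, lie_k, k_central, he, hf, hh, hk, apply_ite φ]

end AffineSl2Family

namespace AffineSl2

variable {A : Type*} [LieRing A] [LieAlgebra ℂ A] (T : AffineSl2 A)
variable {L : Type*} [LieRing L] [LieAlgebra ℂ L] (F : AffineSl2Family L)

def toFamily : AffineSl2Family A where
  __ := T

noncomputable def basis : Module.Basis ((ℤ ⊕ ℤ) ⊕ (ℤ ⊕ Fin 1)) ℂ A :=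
  Module.Basis.mk T.basis_indep T.basis_span.ge

theorem basis_apply (p) : T.basis p = T.toFamily.toFun p := Module.Basis.mk_apply _ _ _

noncomputable def liftLinear : A →ₗ[ℂ] L := T.basis.constr ℂ F.toFun

theorem liftLinear_toFun (p) : T.liftLinear F (T.toFamily.toFun p) = F.toFun p := by
  rw [← basis_apply]
  exact T.basis.constr_basis ℂ _ p

noncomputable def lift : A →ₗ⁅ℂ⁆ L :=
  { T.liftLinear F with
    map_lie' := T.basis.map_lie_of_map_lie_basis _ (fun p p' => by
      simp only [basis_apply]
      exact F.map_lie_toFun T.toFamily _ (fun n => T.liftLinear_toFun F (.inl (.inl n)))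
        (fun n => T.liftLinear_toFun F (.inl (.inr n)))
        (fun n => T.liftLinear_toFun F (.inr (.inl n)))
        (T.liftLinear_toFun F (.inr (.inr 0))) p p') _ _ }

@[simp] theorem lift_e (n : ℤ) : T.lift F (T.e n) = F.e n := T.liftLinear_toFun F (.inl (.inl n))

@[simp] theorem lift_f (n : ℤ) : T.lift F (T.f n) = F.f n := T.liftLinear_toFun F (.inl (.inr n))

@[simp] theorem lift_h (n : ℤ) : T.lift F (T.h n) = F.h n := T.liftLinear_toFun F (.inr (.inl n))

@[simp] theorem lift_k : T.lift F T.k = F.k := T.liftLinear_toFun F (.inr (.inr 0))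

theorem range_lift :
    LinearMap.range (T.lift F).toLinearMap = Submodule.span ℂ (Set.range F.toFun) :=
  T.basis.constr_range ℂ

theorem lift_injective (ψ : L →ₗ[ℂ] A) (he : ∀ n, ψ (F.e n) = T.e n)
    (hf : ∀ n, ψ (F.f n) = T.f n) (hh : ∀ n, ψ (F.h n) = T.h n) (hk : ψ F.k = T.k) :
    Function.Injective (T.lift F) := by
  have hψ : ψ ∘ₗ (T.lift F).toLinearMap = LinearMap.id := T.basis.ext fun p => by
    rcases p with (n | n) | (n | c) <;>
      simp [basis_apply, AffineSl2Family.toFun, toFamily, he, hf, hh, hk]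
  exact Function.LeftInverse.injective (g := ψ) (LinearMap.congr_fun hψ)

end AffineSl2

namespace SlNCq

variable {q : ℂ} {N : ℕ} {L : Type*} [LieRing L] [LieAlgebra ℂ L] (S : SlNCq q N L)

section Embedding

theorem lie_k1 (x : L) : ⁅x, S.k1⁆ = 0 := by rw [← lie_skew, S.k1_central, neg_zero]

theorem ite_k1_lie (p : Prop) [Decidable p] (c : ℂ) (x : L) :
    ⁅if p then c • S.k1 else 0, x⁆ = 0 := by
  split_ifs <;> simp [S.k1_central]

theorem lie_ite_k1 (p : Prop) [Decidable p] (c : ℂ) (x : L) :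
    ⁅x, if p then c • S.k1 else 0⁆ = 0 := by
  split_ifs <;> simp [S.lie_k1]

noncomputable def hatE (i j : Fin N) (m n : ℤ) : L := q ^ (m * n) • S.E i j n m

def hatF (i j : Fin N) (m n : ℤ) : L := S.E j i n (-m)

noncomputable def hatH (i j : Fin N) (m n : ℤ) : L :=
  q ^ (m * n) • S.E i i n 0 - S.E j j n 0 + (if n = 0 then (m : ℂ) • S.k1 else 0)

variable {S} {i j : Fin N} (hq : q ≠ 0) (hij : i ≠ j) (m : ℤ)

include hq in
theorem hatE_lie_hatF (a b : ℤ) :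
    ⁅S.hatE i j m a, S.hatF i j m b⁆
      = S.hatH i j m (a + b) + (if a + b = 0 then (a : ℂ) else 0) • S.k0 := by
  simp [hatE, hatF, hatH, S.bracket_E, smul_smul, mul_add, zpow_add₀ hq]
  split_ifs with h
  · obtain rfl : b = -a := by omega
    simp only [mul_neg, zpow_neg]
    match_scalars <;> field_simp
  · match_scalars <;> field_simp

include hq hij in
theorem hatH_lie_hatE (a b : ℤ) :
    ⁅S.hatH i j m a, S.hatE i j m b⁆ = (2 : ℂ) • S.hatE i j m (a + b) := by
  simp [hatE, hatH, S.bracket_E, hij, hij.symm, smul_smul, ite_k1_lie, mul_add, zpow_add₀ hq]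
  match_scalars
  ring

include hq hij in
theorem hatH_lie_hatF (a b : ℤ) :
    ⁅S.hatH i j m a, S.hatF i j m b⁆ = (-2 : ℂ) • S.hatF i j m (a + b) := by
  simp [hatF, hatH, S.bracket_E, hij, hij.symm, smul_smul, ite_k1_lie]
  match_scalars
  field_simp
  norm_num

include hq hij in
theorem hatH_lie_hatH (a b : ℤ) :
    ⁅S.hatH i j m a, S.hatH i j m b⁆ = (if a + b = 0 then (2 * a : ℂ) else 0) • S.k0 := by
  simp [hatH, S.bracket_E, hij, hij.symm, smul_smul, ite_k1_lie, lie_ite_k1]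
  split_ifs with h
  · obtain rfl : b = -a := by omega
    simp only [mul_neg, zpow_neg]
    match_scalars
    field_simp
    ring
  · simp

include hij in
theorem hatE_lie_hatE (a b : ℤ) : ⁅S.hatE i j m a, S.hatE i j m b⁆ = 0 := by
  simp [hatE, S.bracket_E, hij, hij.symm]

include hij in
theorem hatF_lie_hatF (a b : ℤ) : ⁅S.hatF i j m a, S.hatF i j m b⁆ = 0 := by
  simp [hatF, S.bracket_E, hij, hij.symm]

variable (S) in
noncomputable def hatAFamily : AffineSl2Family L where
  e := S.hatE i j m
  f := S.hatF i j m
  h := S.hatH i j m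
  k := S.k0
  k_central := S.k0_central
  bracket_ef := hatE_lie_hatF hq m
  bracket_he := hatH_lie_hatE hq hij m
  bracket_hf := hatH_lie_hatF hq hij m
  bracket_hh := hatH_lie_hatH hq hij m
  bracket_ee := hatE_lie_hatE hij m
  bracket_ff := hatF_lie_hatF hij m

theorem span_range_hatAFamily :
    Submodule.span ℂ (Set.range (S.hatAFamily hq hij m).toFun) =
      Submodule.span ℂ (hatA S i j m) := by
  apply Submodule.span_eq_span
  · rintro _ ⟨(n | n) | (n | c), rfl⟩
    · exact Submodule.smul_mem _ _ (Submodule.subset_span (Or.inl ⟨n, rfl⟩))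
    · exact Submodule.subset_span (Or.inr (Or.inl ⟨n, rfl⟩))
    · exact Submodule.subset_span (Or.inr (Or.inr (Or.inl ⟨n, rfl⟩)))
    · exact Submodule.subset_span
        (Or.inr (Or.inr (Or.inr (by simp [AffineSl2Family.toFun, hatAFamily]))))
  · rintro _ (⟨n, rfl⟩ | ⟨n, rfl⟩ | ⟨n, rfl⟩ | rfl)
    · have : S.E i j n m = q ^ (-(m * n)) • S.hatE i j m n := by
        rw [hatE, smul_smul, ← zpow_add₀ hq, neg_add_cancel, zpow_zero, one_smul]
      rw [this]
      exact Submodule.smul_mem _ _ (Submodule.subset_span ⟨.inl (.inl n), rfl⟩)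
    · exact Submodule.subset_span ⟨.inl (.inr n), rfl⟩
    · exact Submodule.subset_span ⟨.inr (.inl n), rfl⟩
    · exact Submodule.subset_span ⟨.inr (.inr 0), rfl⟩

end Embedding

section Retraction

noncomputable def basis : Module.Basis (slNCqIdx N) ℂ L :=
  Module.Basis.mk S.basis_indep S.basis_span.ge

theorem basis_inl (p) : S.basis (.inl p) = S.E p.1.1 p.1.2.1 p.1.2.2.1 p.1.2.2.2 :=
  Module.Basis.mk_apply _ _ _

noncomputable def diagE (r : ℕ) : L := if h : r < N then S.E ⟨r, h⟩ ⟨r, h⟩ 0 0 else 0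

theorem basis_cartan (r : Fin (N - 1)) :
    S.basis (.inr (.inl r)) = S.diagE r - S.diagE (r + 1) := by
  refine (Module.Basis.mk_apply _ _ _).trans ?_
  rw [diagE, diagE, dif_pos (by omega), dif_pos (by omega)]
  rfl

theorem basis_k0 : S.basis (.inr (.inr 0)) = S.k0 := Module.Basis.mk_apply _ _ _

theorem basis_k1 : S.basis (.inr (.inr 1)) = S.k1 := Module.Basis.mk_apply _ _ _

theorem sum_Ico_diagE_sub {i j : Fin N} (hij : i ≤ j) :
    ∑ r ∈ Finset.Ico (i : ℕ) j, (S.diagE r - S.diagE (r + 1)) =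
      S.E i i 0 0 - S.E j j 0 0 := by
  have := Finset.sum_Ico_sub (fun r => -S.diagE r) (Fin.le_iff_val_le_val.mp hij)
  simp only [sub_neg_eq_add, neg_add_eq_sub] at this
  rw [this, diagE, diagE, dif_pos i.isLt, dif_pos j.isLt]

variable {A : Type*} [LieRing A] [LieAlgebra ℂ A] (T : AffineSl2 A) (i j : Fin N) (m : ℤ)

/-- A left inverse of `T.lift (S.hatAFamily hq hij m)`. Of the basis vectors
`E_{r,r} - E_{r+1,r+1}` only `r = i` goes to `h₀`, so that their telescoping sum
`E_{i,i} - E_{j,j}` does; `k₁` goes to `0`. -/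
noncomputable def hatARetraction : L →ₗ[ℂ] A :=
  S.basis.constr ℂ <| Sum.elim
    (fun p =>
      let ⟨(a, b, n, d), _⟩ := p
      if a = i ∧ b = j ∧ d = m then q ^ (-(m * n)) • T.e n
      else if a = j ∧ b = i ∧ d = -m then T.f n
      else if a = i ∧ b = i ∧ d = 0 then q ^ (-(m * n)) • T.h n
      else 0)
    (Sum.elim (fun r => if (r : ℕ) = i then T.h 0 else 0) ![T.k, 0])

theorem hatARetraction_diagE_sub (r : Fin (N - 1)) :
    S.hatARetraction T i j m (S.diagE r - S.diagE (r + 1)) =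
      if (r : ℕ) = i then T.h 0 else 0 := by
  rw [← basis_cartan]
  exact S.basis.constr_basis ℂ _ _

theorem hatARetraction_k0 : S.hatARetraction T i j m S.k0 = T.k := by
  rw [← basis_k0]
  exact S.basis.constr_basis ℂ _ _

theorem hatARetraction_k1 : S.hatARetraction T i j m S.k1 = 0 := by
  rw [← basis_k1]
  exact S.basis.constr_basis ℂ _ _

variable {S T i j m}

theorem hatARetraction_E (a b : Fin N) (n d : ℤ) (h : ¬(a = b ∧ n = 0 ∧ d = 0)) :
    S.hatARetraction T i j m (S.E a b n d) =
      if a = i ∧ b = j ∧ d = m then q ^ (-(m * n)) • T.e n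
      else if a = j ∧ b = i ∧ d = -m then T.f n
      else if a = i ∧ b = i ∧ d = 0 then q ^ (-(m * n)) • T.h n
      else 0 :=
  (congrArg _ (S.basis_inl ⟨(a, b, n, d), h⟩)).symm.trans (S.basis.constr_basis ℂ _ _)

variable (hq : q ≠ 0)

include hq in
theorem hatARetraction_hatE (hij : i ≠ j) (n : ℤ) :
    S.hatARetraction T i j m (S.hatE i j m n) = T.e n := by
  rw [hatE, map_smul, hatARetraction_E i j n m fun h => hij h.1,
    if_pos ⟨rfl, rfl, rfl⟩, smul_smul, ← zpow_add₀ hq, add_neg_cancel, zpow_zero, one_smul]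

theorem hatARetraction_hatF (hij : i ≠ j) (n : ℤ) :
    S.hatARetraction T i j m (S.hatF i j m n) = T.f n := by
  rw [hatF, hatARetraction_E j i n (-m) fun h => hij h.1.symm]
  simp [hij, hij.symm]

theorem hatARetraction_E_sub_E (hij : i < j) :
    S.hatARetraction T i j m (S.E i i 0 0 - S.E j j 0 0) = T.h 0 := by
  have hi : (i : ℕ) ∈ Finset.Ico (i : ℕ) j := Finset.mem_Ico.mpr ⟨le_rfl, hij⟩
  rw [← S.sum_Ico_diagE_sub hij.le, map_sum,
    Finset.sum_congr rfl (g := fun r : ℕ => if r = (i : ℕ) then T.h 0 else 0) fun r hr =>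
      S.hatARetraction_diagE_sub T i j m ⟨r, by have := (Finset.mem_Ico.mp hr).2; omega⟩]
  simp [hi]

include hq in
theorem hatARetraction_hatH (hij : i < j) (n : ℤ) :
    S.hatARetraction T i j m (S.hatH i j m n) = T.h n := by
  rcases eq_or_ne n 0 with rfl | hn
  · simp [hatH, hatARetraction_E_sub_E hij, hatARetraction_k1]
  · rw [hatH, if_neg hn, add_zero, map_sub, map_smul,
      hatARetraction_E i i n 0 fun h => hn h.2.1,
      hatARetraction_E j j n 0 fun h => hn h.2.1]
    simp [hij.ne, hij.ne', smul_smul, mul_inv_cancel₀ (zpow_ne_zero _ hq)]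

end Retraction

end SlNCq

theorem hatA_subalgebra_iso_affine_sl2_general (q : ℂ) (hq : q ≠ 0)
    (N : ℕ)
    (L : Type*) [LieRing L] [LieAlgebra ℂ L] (S : SlNCq q N L)
    (i j : Fin N) (hij : i < j) (m : ℤ)
    (A : Type*) [LieRing A] [LieAlgebra ℂ A] (T : AffineSl2 A) :
    (∀ x ∈ Submodule.span ℂ (hatA S i j m), ∀ y ∈ Submodule.span ℂ (hatA S i j m),
      ⁅x, y⁆ ∈ Submodule.span ℂ (hatA S i j m)) ∧
    ∃ Φ : A →ₗ⁅ℂ⁆ L, Function.Injective Φ ∧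
      LinearMap.range Φ.toLinearMap = Submodule.span ℂ (hatA S i j m) ∧
      (∀ n : ℤ, Φ (T.e n) = q ^ (m * n) • S.E i j n m) ∧
      (∀ n : ℤ, Φ (T.f n) = S.E j i n (-m)) ∧
      (∀ n : ℤ, Φ (T.h n) = q ^ (m * n) • S.E i i n 0 - S.E j j n 0
        + (if n = 0 then (m : ℂ) • S.k1 else 0)) ∧
      Φ T.k = S.k0 := by
  set F := S.hatAFamily hq hij.ne m
  have hrange : LinearMap.range (T.lift F).toLinearMap = Submodule.span ℂ (hatA S i j m) :=
    (T.range_lift F).trans (S.span_range_hatAFamily hq hij.ne m)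
  refine ⟨?_, T.lift F, ?_, hrange, T.lift_e F, T.lift_f F, T.lift_h F, T.lift_k F⟩
  · rw [← hrange]
    exact fun x hx y hy => (T.lift F).range.lie_mem hx hy
  · exact T.lift_injective F (S.hatARetraction T i j m) (SlNCq.hatARetraction_hatE hq hij.ne)
      (SlNCq.hatARetraction_hatF hij.ne) (SlNCq.hatARetraction_hatH hq hij)
      (S.hatARetraction_k0 T i j m)

/-- for `1 ≤ i < j ≤ N` and `m ∈ ℤ`, the span `Â_{i,j}(m)` of the elements
`E_{i,j}t₀ⁿt₁^m`, `E_{j,i}t₀ⁿt₁^{-m}`, `q^{mn}E_{i,i}t₀ⁿ - E_{j,j}t₀ⁿ + mδ_{n,0}k₁` and `k₀`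
is a Lie subalgebra of `ŝl_N(ℂ_q)`, and the indicated assignment identifies it with the
affine Lie algebra `ŝl₂` (stated via the inverse map: an injective Lie algebra morphism
from `ŝl₂` onto `Â_{i,j}(m)`). -/
theorem hatA_subalgebra_iso_affine_sl2 (q : ℂ) (hq : q ≠ 0)
    (hq' : ∀ n : ℕ, n ≠ 0 → q ^ n ≠ 1) (N : ℕ) (hN : 2 ≤ N)
    (L : Type*) [LieRing L] [LieAlgebra ℂ L] (S : SlNCq q N L)
    (i j : Fin N) (hij : i < j) (m : ℤ)
    (A : Type*) [LieRing A] [LieAlgebra ℂ A] (T : AffineSl2 A) :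
    (∀ x ∈ Submodule.span ℂ (hatA S i j m), ∀ y ∈ Submodule.span ℂ (hatA S i j m),
      ⁅x, y⁆ ∈ Submodule.span ℂ (hatA S i j m)) ∧
    ∃ Φ : A →ₗ⁅ℂ⁆ L, Function.Injective Φ ∧
      LinearMap.range Φ.toLinearMap = Submodule.span ℂ (hatA S i j m) ∧
      (∀ n : ℤ, Φ (T.e n) = q ^ (m * n) • S.E i j n m) ∧
      (∀ n : ℤ, Φ (T.f n) = S.E j i n (-m)) ∧
      (∀ n : ℤ, Φ (T.h n) = q ^ (m * n) • S.E i i n 0 - S.E j j n 0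
        + (if n = 0 then (m : ℂ) • S.k1 else 0)) ∧
      Φ T.k = S.k0 :=
  hatA_subalgebra_iso_affine_sl2_general q hq N L S i j hij m A T
end

section
/- Let W = ⊕_{n∈ℕ}W(n) be a nonzero ℕ-graded integrable ŝl_N(ℂ_q)-module on which k₀ and k₁ act as scalars ℓ₀ and ℓ₁, respectively. Then ℓ₀ is a nonnegative integer, ℓ₁ = 0, and the subspace Ω_W = {w ∈ W : ŝl_N(ℂ_q)^+·w = 0} is nonzero and stable under the action of Ĥ. -/
section Graded

variable {q : ℂ} {N : ℕ} {L : Type*} [LieRing L] [LieAlgebra ℂ L]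

/-- Extension of an `ℕ`-indexed family of submodules to `ℤ` by `⊥` in negative degrees. -/
def gradeZ {W : Type*} [AddCommGroup W] [Module ℂ W]
    (Wgr : ℕ → Submodule ℂ W) : ℤ → Submodule ℂ W :=
  fun z => if 0 ≤ z then Wgr z.toNat else ⊥

/-- The set `Ω_W = {w ∈ W ∣ ŝl_N(ℂ_q)⁺ · w = 0}`, where `ŝl_N(ℂ_q)⁺` is spanned by the
`E_{i,j}t₀^{m₀}t₁^{m₁}` with `m₀ > 0` together with the `E_{i,j}t₁^{m}` with `i < j`. -/
def slPlusAnnihilated (S : SlNCq q N L) (W : Type*) [AddCommGroup W]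
    [LieRingModule L W] : Set W :=
  {w | (∀ (i j : Fin N) (m0 m1 : ℤ), 0 < m0 → ⁅S.E i j m0 m1, w⁆ = 0) ∧
    (∀ (i j : Fin N) (m : ℤ), i < j → ⁅S.E i j 0 m, w⁆ = 0)}

/-- The elements `h_{i,n}` spanning (together with `k₁`) the subalgebra `Ĥ`:
`h_{i,n} = (E_{i,i}-E_{i+1,i+1})t₁ⁿ` for `1 ≤ i ≤ N-1`,
`h_{N,n} = -qⁿ E_{1,1}t₁ⁿ + E_{N,N}t₁ⁿ` for `n ≠ 0`, and
`h_{N,0} = k₀ - (E_{1,1} - E_{N,N})`. -/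
noncomputable def hElt (S : SlNCq q N L) (hN : 2 ≤ N) : Fin N → ℤ → L := fun i n =>
  if h : i.1 + 1 < N then S.E i i 0 n - S.E ⟨i.1 + 1, h⟩ ⟨i.1 + 1, h⟩ 0 n
  else if n = 0 then S.k0 - (S.E ⟨0, by omega⟩ ⟨0, by omega⟩ 0 0 - S.E i i 0 0)
  else (-(q ^ n)) • S.E ⟨0, by omega⟩ ⟨0, by omega⟩ 0 n + S.E i i 0 n

end Graded

/-!
Let `V = W(n₀)` be the lowest nonzero graded piece: elements of positive `t₀`-degree kill it and
those of degree zero preserve it. For `i < j`, `E_{i,j}t₁ᵐ` is a nonzero multiple of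
`[E_{i,i}t₀t₁ᵐ, E_{i,j}t₀⁻¹]`, so on vectors killed by positive degree it lowers the order of
nilpotency of `E_{i,j}t₀⁻¹`; hence the `E_{i,j}t₁ᵐ` have a common null vector, and treating the
positive roots by decreasing height gives a nonzero vector of `Ω_W` in `V`.

A primitive vector `v ∈ V` for the `sl₂` spanned by `E_{1,N}`, `E_{N,1}` has weight `a ∈ ℕ`, and it
is also primitive for the `sl₂`-triple `(E_{N,N} - E_{1,1} + k₀ + m k₁, E_{N,1}t₀t₁ᵐ,
qᵐ E_{1,N}t₀⁻¹t₁⁻ᵐ)`, whose `f` acts locally nilpotently. So `ℓ₀ - a + m ℓ₁ ∈ ℕ` for every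
`m ∈ ℤ`, which forces `ℓ₁ = 0` and `ℓ₀ ∈ ℕ`. Finally `[ŝl_N(ℂ_q)⁺, Ĥ] ⊆ ŝl_N(ℂ_q)⁺`, so `Ĥ`
preserves `Ω_W`.
-/

open LieModule

lemma eq_zero_and_exists_nat_of_forall_add_int_mul_eq_nat {K : Type*} [Field K] [CharZero K]
    {c d : K} (h : ∀ m : ℤ, ∃ s : ℕ, c + m * d = s) : d = 0 ∧ ∃ s : ℕ, c = s := by
  obtain ⟨s₀, hs₀⟩ := h 0
  obtain ⟨s₁, hs₁⟩ := h 1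
  simp only [Int.cast_zero, zero_mul, add_zero, Int.cast_one, one_mul] at hs₀ hs₁
  set k : ℤ := s₁ - s₀
  have hd : d = k := by simp only [k]; push_cast; linear_combination hs₁ - hs₀
  -- at `m = -(s₀ + 1) k` the value `s₀ - (s₀ + 1) k²` is negative unless `k = 0`
  obtain ⟨s, hs⟩ := h (-(s₀ + 1) * k)
  have hsZ : (s : ℤ) = s₀ - (s₀ + 1) * k ^ 2 := by
    have : ((s : ℤ) : K) = ((s₀ - (s₀ + 1) * k ^ 2 : ℤ) : K) := by
      rw [Int.cast_natCast, ← hs, hs₀, hd]; push_cast; ring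
    exact_mod_cast this
  have hk : k = 0 := by
    by_contra hk
    have : 0 < k ^ 2 := by positivity
    nlinarith [Int.natCast_nonneg s, Int.natCast_nonneg s₀]
  exact ⟨by rw [hd, hk, Int.cast_zero], s₀, hs₀⟩

lemma exists_ne_bot_forall_lt_eq_bot_of_iSup_eq_top {R W : Type*} [Semiring R]
    [AddCommMonoid W] [Module R W] [Nontrivial W] {Wgr : ℕ → Submodule R W}
    (h : ⨆ n, Wgr n = ⊤) : ∃ n, Wgr n ≠ ⊥ ∧ ∀ k < n, Wgr k = ⊥ := by
  classical
  have hex : ∃ n, Wgr n ≠ ⊥ := by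
    by_contra! H
    exact bot_ne_top (h ▸ iSup_eq_bot.mpr H).symm
  exact ⟨Nat.find hex, Nat.find_spec hex, fun k hk => not_not.mp (Nat.find_min hex hk)⟩

namespace IsSl2Triple

variable {K L M : Type*} [Field K] [CharZero K] [LieRing L] [LieAlgebra K L]
  [AddCommGroup M] [Module K M] [LieRingModule L M] [LieModule K L M] {h e f : L}

lemma of_e_ne_zero (he : e ≠ 0) (hef : ⁅e, f⁆ = h) (hhe : ⁅h, e⁆ = (2 : K) • e)
    (hhf : ⁅h, f⁆ = -((2 : K) • f)) : IsSl2Triple h e f where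
  h_ne_zero := by
    rintro rfl
    exact he (by simpa using hhe.symm)
  lie_e_f := hef
  lie_h_e_nsmul := by rw [hhe, ofNat_smul_eq_nsmul]
  lie_h_f_nsmul := by rw [hhf, ofNat_smul_eq_nsmul]

lemma lie_h_pow_toEnd_f_apply (t : IsSl2Triple h e f) (v : M) (k : ℕ) :
    ⁅h, (toEnd K L M f ^ k) v⁆ =
      (toEnd K L M f ^ k) ⁅h, v⁆ - (2 * k : K) • (toEnd K L M f ^ k) v := by
  induction k with
  | zero => simp
  | succ k ih =>
    simp only [pow_succ', Module.End.mul_apply, toEnd_apply_apply, leibniz_lie h f,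
      t.lie_lie_smul_f K, ih, neg_lie, smul_lie, lie_sub, lie_smul]
    push_cast
    module

lemma lie_e_pow_succ_toEnd_f_apply (t : IsSl2Triple h e f) {v : M} (hv : ⁅e, v⁆ = 0)
    (k : ℕ) :
    ⁅e, (toEnd K L M f ^ (k + 1)) v⁆ =
      (k + 1 : K) • (toEnd K L M f ^ k) (⁅h, v⁆ - (k : K) • v) := by
  induction k with
  | zero => simp [leibniz_lie e f, t.lie_e_f, hv]
  | succ k ih =>
    rw [pow_succ', Module.End.mul_apply, toEnd_apply_apply, leibniz_lie e f, t.lie_e_f,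
      ih, t.lie_h_pow_toEnd_f_apply]
    simp only [pow_succ', Module.End.mul_apply, toEnd_apply_apply, map_sub, map_smul, lie_sub,
      lie_smul]
    push_cast
    module

/-- If `e v = 0` and `f^(k+1) v = 0`, then `f^k (h v - k v) = 0`: either `v` is primitive of
weight `k`, or `h v - k v` is a vector of the same kind with a smaller nilpotency order. -/
lemma exists_hasPrimitiveVectorWith_nat_of_lie_e_eq_zero (t : IsSl2Triple h e f)
    (V : Submodule K M) (hV : ∀ v ∈ V, ⁅h, v⁆ ∈ V) {v : M} (hvV : v ∈ V) (hv : v ≠ 0)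
    (he : ⁅e, v⁆ = 0) (hf : ∃ n, (toEnd K L M f ^ n) v = 0) :
    ∃ w ∈ V, ∃ n : ℕ, t.HasPrimitiveVectorWith w (n : K) := by
  obtain ⟨n, hn⟩ := hf
  induction n generalizing v with
  | zero => exact absurd (by simpa using hn) hv
  | succ k ih =>
    have hk : (toEnd K L M f ^ k) (⁅h, v⁆ - (k : K) • v) = 0 := by
      have := t.lie_e_pow_succ_toEnd_f_apply (K := K) he k
      rw [hn, lie_zero, eq_comm, smul_eq_zero] at this
      exact this.resolve_left (Nat.cast_add_one_ne_zero k)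
    by_cases hu : ⁅h, v⁆ - (k : K) • v = 0
    · exact ⟨v, hvV, k, hv, sub_eq_zero.mp hu, he⟩
    · refine ih (V.sub_mem (hV v hvV) (V.smul_mem _ hvV)) hu ?_ hk
      rw [lie_sub, lie_smul, he, smul_zero, sub_zero, leibniz_lie, he, lie_zero, add_zero,
        ← lie_skew, t.lie_h_e_nsmul, neg_lie, nsmul_lie, he, nsmul_zero, neg_zero]

lemma HasPrimitiveVectorWith.exists_nat_of_exists_pow_toEnd_f_eq_zero
    {t : IsSl2Triple h e f} {m : M} {μ : K} (P : t.HasPrimitiveVectorWith m μ)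
    (hf : ∃ n, (toEnd K L M f ^ n) m = 0) : ∃ n : ℕ, μ = n := by
  obtain ⟨n, hn₁, hn₂⟩ := Nat.exists_not_and_succ_of_not_zero_of_exists P.ne_zero hf
  refine ⟨n, ?_⟩
  have := P.lie_e_pow_succ_toEnd_f n
  rw [hn₂, lie_zero, eq_comm, smul_eq_zero_iff_left hn₁, mul_eq_zero, sub_eq_zero] at this
  exact this.resolve_left (Nat.cast_add_one_ne_zero n)

end IsSl2Triple

section LieModule

variable {K L M : Type*} [Field K] [LieRing L] [LieAlgebra K L]
  [AddCommGroup M] [Module K M] [LieRingModule L M] [LieModule K L M]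

lemma lie_toEnd_pow_apply_of_lie_eq_zero {x c : L} (hxc : ⁅x, c⁆ = 0) (u : M) (k : ℕ) :
    ⁅x, (toEnd K L M c ^ k) u⁆ = (toEnd K L M c ^ k) ⁅x, u⁆ := by
  induction k with
  | zero => rfl
  | succ k ih =>
    simp only [pow_succ', Module.End.mul_apply, toEnd_apply_apply, leibniz_lie x c, hxc,
      zero_lie, zero_add, ih]

lemma lie_toEnd_pow_succ_apply_of_lie_eq_smul {a c x : L} {r : K} (hac : ⁅a, c⁆ = r • x)
    (hxc : ⁅x, c⁆ = 0) {u : M} (hau : ⁅a, u⁆ = 0) (k : ℕ) :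
    ⁅a, (toEnd K L M c ^ (k + 1)) u⁆ = ((k + 1 : K) * r) • (toEnd K L M c ^ k) ⁅x, u⁆ := by
  induction k with
  | zero => simp [leibniz_lie a c, hac, hau]
  | succ k ih =>
    rw [pow_succ', Module.End.mul_apply, toEnd_apply_apply, leibniz_lie a c, hac, ih, smul_lie,
      lie_toEnd_pow_apply_of_lie_eq_zero hxc, lie_smul, pow_succ', Module.End.mul_apply,
      toEnd_apply_apply]
    push_cast
    module

/-- If `[aᵢ, c] = rᵢ xᵢ` with `rᵢ ≠ 0` and the `aᵢ` kill `u`, then `xᵢ` lowers the order of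
nilpotency of `c` on `u`; so walking along the `xᵢ` from `v` must stop at a common null vector. -/
lemma exists_ne_zero_forall_lie_eq_zero [CharZero K] {ι : Type*} (P : M → Prop) {a x : ι → L}
    {c : L} {r : ι → K} (hr : ∀ i, r i ≠ 0) (hac : ∀ i, ⁅a i, c⁆ = r i • x i)
    (hxc : ∀ i, ⁅x i, c⁆ = 0) (hPa : ∀ u, P u → ∀ i, ⁅a i, u⁆ = 0)
    (hPx : ∀ u, P u → ∀ i, P ⁅x i, u⁆) {v : M} (hv : P v) (hv0 : v ≠ 0)
    (hc : ∃ n, (toEnd K L M c ^ n) v = 0) : ∃ u, P u ∧ u ≠ 0 ∧ ∀ i, ⁅x i, u⁆ = 0 := by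
  obtain ⟨n, hn⟩ := hc
  induction n generalizing v with
  | zero => exact absurd (by simpa using hn) hv0
  | succ n ih =>
    by_cases hx : ∀ i, ⁅x i, v⁆ = 0
    · exact ⟨v, hv, hv0, hx⟩
    obtain ⟨i, hi⟩ := not_forall.mp hx
    refine ih (hPx v hv i) hi ?_
    have := lie_toEnd_pow_succ_apply_of_lie_eq_smul (hac i) (hxc i) (hPa v hv i) n
    rw [hn, lie_zero, eq_comm, smul_eq_zero] at this
    exact this.resolve_left (mul_ne_zero (Nat.cast_add_one_ne_zero n) (hr i))

lemma lie_lie_eq_zero_of_lie_mem_span {A : Set L} {x : L}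
    (hx : ∀ y ∈ A, ⁅y, x⁆ ∈ Submodule.span K A) {w : M} (hw : ∀ y ∈ A, ⁅y, w⁆ = 0) :
    ∀ y ∈ A, ⁅y, ⁅x, w⁆⁆ = 0 := by
  have hspan : ∀ z ∈ Submodule.span K A, ⁅z, w⁆ = 0 := by
    intro z hz
    induction hz using Submodule.span_induction with
    | mem z hz => exact hw z hz
    | zero => exact zero_lie w
    | add z z' _ _ hz hz' => rw [add_lie, hz, hz', add_zero]
    | smul c z _ hz => rw [smul_lie, hz, smul_zero]
  intro y hy
  rw [leibniz_lie, hw y hy, lie_zero, add_zero, hspan _ (hx y hy)]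

end LieModule

def rootHeight {N : ℕ} (p : Fin N × Fin N) : ℤ := (p.2 : ℤ) - p.1

namespace SlNCq

variable {q : ℂ} {N : ℕ} {L : Type*} [LieRing L] [LieAlgebra ℂ L] (S : SlNCq q N L)

lemma E_ne_zero {a b : Fin N} (hab : a ≠ b) (m0 m1 : ℤ) : S.E a b m0 m1 ≠ 0 :=
  S.basis_indep.ne_zero (Sum.inl ⟨(a, b, m0, m1), fun h => hab h.1⟩ : slNCqIdx N)

lemma lie_E_mem_span {B : Set L} {i j k l : Fin N} {m0 m1 n0 n1 : ℤ}
    (hc : ¬(j = k ∧ i = l ∧ m0 + n0 = 0 ∧ m1 + n1 = 0))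
    (hjk : j = k → S.E i l (m0 + n0) (m1 + n1) ∈ B)
    (hil : i = l → S.E k j (m0 + n0) (m1 + n1) ∈ B) :
    ⁅S.E i j m0 m1, S.E k l n0 n1⁆ ∈ Submodule.span ℂ B := by
  rw [S.bracket_E, if_neg hc, add_zero]
  refine Submodule.sub_mem _ ?_ ?_ <;> split_ifs with h
  exacts [Submodule.smul_mem _ _ (Submodule.subset_span (hjk h)), Submodule.zero_mem _,
    Submodule.smul_mem _ _ (Submodule.subset_span (hil h)), Submodule.zero_mem _]

lemma isSl2Triple (hq : q ≠ 0) {i j : Fin N} (hij : i ≠ j) (m0 m1 : ℤ) :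
    IsSl2Triple (S.E i i 0 0 - S.E j j 0 0 + ((m0 : ℂ) • S.k0 + (m1 : ℂ) • S.k1))
      (S.E i j m0 m1) (q ^ (m0 * m1) • S.E j i (-m0) (-m1)) := by
  have hk : ∀ y : L, ⁅(m0 : ℂ) • S.k0 + (m1 : ℂ) • S.k1, y⁆ = 0 := fun y => by
    rw [add_lie, smul_lie, smul_lie, S.k0_central, S.k1_central, smul_zero, smul_zero, add_zero]
  refine IsSl2Triple.of_e_ne_zero (K := ℂ) (S.E_ne_zero hij m0 m1) ?_ ?_ ?_
  · have hqq : q ^ (m0 * m1) * q ^ (-(m1 * m0)) = 1 := by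
      rw [← zpow_add₀ hq, mul_comm m1, add_neg_cancel, zpow_zero]
    rw [lie_smul, S.bracket_E]
    simp only [true_and, add_neg_cancel, if_pos, mul_neg, neg_mul]
    rw [smul_add, smul_sub, smul_smul, smul_smul, smul_smul, hqq, one_smul, one_smul, one_smul]
  · rw [add_lie, hk, add_zero, sub_lie, S.bracket_E, S.bracket_E]
    simp [hij, hij.symm]
    module
  · rw [add_lie, hk, add_zero, sub_lie, lie_smul, lie_smul, S.bracket_E, S.bracket_E]
    simp [hij, hij.symm]
    module

def slPlus : Set L := {y | ∃ a b m0 m1, (0 < m0 ∨ m0 = 0 ∧ a < b) ∧ S.E a b m0 m1 = y}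

def rootVectors (R : Set (Fin N × Fin N)) : Set L :=
  {y | ∃ p ∈ R, ∃ m, S.E p.1 p.2 0 m = y}

lemma lie_E_diag_mem_span {y : L} (hy : y ∈ S.slPlus) (c : Fin N) (n : ℤ) :
    ⁅y, S.E c c 0 n⁆ ∈ Submodule.span ℂ S.slPlus := by
  obtain ⟨a, b, m0, m1, hm, rfl⟩ := hy
  refine S.lie_E_mem_span ?_ ?_ ?_
  · rintro ⟨rfl, rfl, h, -⟩
    rcases hm with hm | ⟨-, hab⟩
    · omega
    · exact hab.false
  · rintro rfl
    exact ⟨a, b, _, _, by simpa using hm, rfl⟩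
  · rintro rfl
    exact ⟨a, b, _, _, by simpa using hm, rfl⟩

lemma lie_central_mem_span {y k : L} (hk : ∀ x : L, ⁅k, x⁆ = 0) :
    ⁅y, k⁆ ∈ Submodule.span ℂ S.slPlus := by
  rw [← lie_skew, hk, neg_zero]
  exact Submodule.zero_mem _

lemma lie_hElt_mem_span (hN : 2 ≤ N) {y : L} (hy : y ∈ S.slPlus) (i : Fin N) (n : ℤ) :
    ⁅y, hElt S hN i n⁆ ∈ Submodule.span ℂ S.slPlus := by
  have hE := S.lie_E_diag_mem_span hy
  unfold hElt
  split_ifs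
  · rw [lie_sub]
    exact Submodule.sub_mem _ (hE _ _) (hE _ _)
  · rw [lie_sub, lie_sub]
    exact Submodule.sub_mem _ (S.lie_central_mem_span S.k0_central)
      (Submodule.sub_mem _ (hE _ _) (hE _ _))
  · rw [lie_add, lie_smul]
    exact Submodule.add_mem _ (Submodule.smul_mem _ _ (hE _ _)) (hE _ _)

variable {W : Type*} [AddCommGroup W] [LieRingModule L W]

lemma mem_slPlusAnnihilated_iff {w : W} :
    w ∈ slPlusAnnihilated S W ↔ ∀ y ∈ S.slPlus, ⁅y, w⁆ = 0 := by
  constructor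
  · rintro ⟨hpos, hzero⟩ _ ⟨a, b, m0, m1, hm | ⟨rfl, hab⟩, rfl⟩
    exacts [hpos a b m0 m1 hm, hzero a b m1 hab]
  · intro h
    exact ⟨fun a b m0 m1 hm => h _ ⟨a, b, m0, m1, Or.inl hm, rfl⟩,
      fun a b m hab => h _ ⟨a, b, 0, m, Or.inr ⟨rfl, hab⟩, rfl⟩⟩

variable [Module ℂ W]

/-- The lowest nonzero graded piece of an `ℕ`-graded module is the motivating example. -/
structure IsLowestSubspace (V : Submodule ℂ W) : Prop where
  lie_E_eq_zero : ∀ v ∈ V, ∀ a b m0 m1, 0 < m0 → ⁅S.E a b m0 m1, v⁆ = 0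
  lie_E_zero_mem : ∀ v ∈ V, ∀ a b m1, ⁅S.E a b 0 m1, v⁆ ∈ V

lemma isLowestSubspace_of_graded {Wgr : ℕ → Submodule ℂ W}
    (hgraded : ∀ (n : ℕ) (i j : Fin N) (m0 m1 : ℤ), ∀ w ∈ Wgr n,
      ⁅S.E i j m0 m1, w⁆ ∈ gradeZ Wgr ((n : ℤ) - m0))
    {n : ℕ} (hlow : ∀ k < n, Wgr k = ⊥) : S.IsLowestSubspace (Wgr n) where
  lie_E_eq_zero v hv a b m0 m1 hm0 := by
    have h := hgraded n a b m0 m1 v hv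
    unfold gradeZ at h
    split_ifs at h with hnm
    · rwa [hlow _ (by omega), Submodule.mem_bot] at h
    · rwa [Submodule.mem_bot] at h
  lie_E_zero_mem v hv a b m1 := by
    simpa [gradeZ] using hgraded n a b 0 m1 v hv

variable [LieModule ℂ L W]

lemma IsIntegrable.exists_pow_toEnd_smul_eq_zero {S : SlNCq q N L} (h : S.IsIntegrable W)
    {a b : Fin N} (hab : a ≠ b) (c : ℂ) (m0 m1 : ℤ) (w : W) :
    ∃ n, (toEnd ℂ L W (c • S.E a b m0 m1) ^ n) w = 0 := by
  obtain ⟨n, hn⟩ := h a b hab m0 m1 w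
  refine ⟨n, ?_⟩
  rw [map_smul, smul_pow, LinearMap.smul_apply, Module.End.pow_apply]
  exact (congrArg _ hn).trans (smul_zero _)

lemma lie_mem_slPlusAnnihilated {x : L}
    (hx : ∀ y ∈ S.slPlus, ⁅y, x⁆ ∈ Submodule.span ℂ S.slPlus) {w : W}
    (hw : w ∈ slPlusAnnihilated S W) : ⁅x, w⁆ ∈ slPlusAnnihilated S W := by
  rw [mem_slPlusAnnihilated_iff] at hw ⊢
  exact lie_lie_eq_zero_of_lie_mem_span hx hw

lemma exists_ne_zero_annihilated_rootVectors_insert (hq : q ≠ 0) {V : Submodule ℂ W}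
    (hV : S.IsLowestSubspace V) (hint : S.IsIntegrable W) {R : Set (Fin N × Fin N)}
    {i j : Fin N} (hij : i < j) (hR : ∀ p ∈ R, p.1 < p.2)
    (hRij : ∀ p, rootHeight (i, j) < rootHeight p → p ∈ R)
    {v : W} (hv : v ∈ V) (hv0 : v ≠ 0) (hvR : ∀ y ∈ S.rootVectors R, ⁅y, v⁆ = 0) :
    ∃ u ∈ V, u ≠ 0 ∧ ∀ y ∈ S.rootVectors (insert (i, j) R), ⁅y, u⁆ = 0 := by
  have hij' : i ≠ j := hij.ne
  have hclosed : ∀ u ∈ V, (∀ y ∈ S.rootVectors R, ⁅y, u⁆ = 0) → ∀ m : ℤ,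
      ⁅S.E i j 0 m, u⁆ ∈ V ∧ ∀ y ∈ S.rootVectors R, ⁅y, ⁅S.E i j 0 m, u⁆⁆ = 0 := by
    refine fun u hu huR m => ⟨hV.lie_E_zero_mem u hu i j m, ?_⟩
    refine lie_lie_eq_zero_of_lie_mem_span (K := ℂ) ?_ huR
    rintro _ ⟨⟨a, b⟩, hab, m', rfl⟩
    have hab' : a < b := hR _ hab
    rw [Fin.lt_def] at hij hab'
    dsimp only
    refine S.lie_E_mem_span ?_ ?_ ?_
    · rintro ⟨rfl, rfl, -⟩
      omega
    · rintro rfl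
      exact ⟨(a, j), hRij _ (by simp only [rootHeight]; omega), _, rfl⟩
    · rintro rfl
      exact ⟨(i, b), hRij _ (by simp only [rootHeight]; omega), _, rfl⟩
  obtain ⟨u, ⟨huV, huR⟩, hu0, huij⟩ := exists_ne_zero_forall_lie_eq_zero
    (fun u => u ∈ V ∧ ∀ y ∈ S.rootVectors R, ⁅y, u⁆ = 0)
    (a := fun m => S.E i i 1 m) (x := fun m => S.E i j 0 m) (c := S.E i j (-1) 0)
    (r := fun m => q ^ (m * -1)) (fun m => zpow_ne_zero _ hq)
    (fun m => by simp [S.bracket_E, hij'])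
    (fun m => by simp [S.bracket_E, hij', hij'.symm])
    (fun u hu m => hV.lie_E_eq_zero u hu.1 i i 1 m one_pos)
    (fun u hu m => hclosed u hu.1 hu.2 m) ⟨hv, hvR⟩ hv0
    (by simpa using hint.exists_pow_toEnd_smul_eq_zero hij' 1 (-1) 0 v)
  refine ⟨u, huV, hu0, ?_⟩
  rintro _ ⟨p, hp | hp, m, rfl⟩
  · exact hp ▸ huij m
  · exact huR _ ⟨p, hp, m, rfl⟩

lemma exists_ne_zero_annihilated_rootVectors (hq : q ≠ 0) {V : Submodule ℂ W}
    (hV : S.IsLowestSubspace V) (hint : S.IsIntegrable W) (hV0 : V ≠ ⊥)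
    (R : Finset (Fin N × Fin N)) (hR : ∀ p ∈ R, p.1 < p.2)
    (hRup : ∀ p ∈ R, ∀ p', rootHeight p < rootHeight p' → p' ∈ R) :
    ∃ u ∈ V, u ≠ 0 ∧ ∀ y ∈ S.rootVectors R, ⁅y, u⁆ = 0 := by
  induction R using Finset.strongInduction with
  | H R ih =>
    rcases R.eq_empty_or_nonempty with rfl | hne
    · obtain ⟨v, hv, hv0⟩ := (Submodule.ne_bot_iff V).mp hV0
      exact ⟨v, hv, hv0, by simp [rootVectors]⟩
    -- remove a root of minimal height, so that all higher roots stay killed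
    obtain ⟨ρ, hρ, hmin⟩ := R.exists_min_image rootHeight hne
    have hhigher : ∀ p, rootHeight ρ < rootHeight p → p ∈ R.erase ρ := fun p hp =>
      Finset.mem_erase.mpr ⟨by rintro rfl; exact hp.false, hRup ρ hρ p hp⟩
    obtain ⟨v, hv, hv0, hvR⟩ := ih (R.erase ρ) (Finset.erase_ssubset hρ)
      (fun p hp => hR p (Finset.mem_of_mem_erase hp))
      (fun p hp p' hpp' => hhigher p' ((hmin p (Finset.mem_of_mem_erase hp)).trans_lt hpp'))
    have := S.exists_ne_zero_annihilated_rootVectors_insert hq hV hint (hR ρ hρ)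
      (fun p hp => hR p (Finset.mem_of_mem_erase hp)) hhigher hv hv0 hvR
    rwa [← Finset.coe_insert, Finset.insert_erase hρ] at this

lemma exists_ne_zero_mem_slPlusAnnihilated (hq : q ≠ 0) {V : Submodule ℂ W}
    (hV : S.IsLowestSubspace V) (hint : S.IsIntegrable W) (hV0 : V ≠ ⊥) :
    ∃ w ∈ V, w ≠ 0 ∧ w ∈ slPlusAnnihilated S W := by
  obtain ⟨w, hw, hw0, hwR⟩ := S.exists_ne_zero_annihilated_rootVectors hq hV hint hV0
    (Finset.univ.filter fun p => p.1 < p.2) (by simp)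
    (fun p hp p' hpp' => by
      simp only [Finset.mem_filter, Finset.mem_univ, true_and, Fin.lt_def] at hp ⊢
      simp only [rootHeight] at hpp'
      omega)
  exact ⟨w, hw, hw0, fun a b m0 m1 hm0 => hV.lie_E_eq_zero w hw a b m0 m1 hm0,
    fun a b m hab => hwR _ ⟨(a, b), by simpa using hab, m, rfl⟩⟩

lemma level_eq_nat_and_k1_eq_zero (hq : q ≠ 0) {V : Submodule ℂ W}
    (hV : S.IsLowestSubspace V) (hint : S.IsIntegrable W) {ℓ0 ℓ1 : ℂ}
    (h0 : ∀ w : W, ⁅S.k0, w⁆ = ℓ0 • w) (h1 : ∀ w : W, ⁅S.k1, w⁆ = ℓ1 • w)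
    {i j : Fin N} (hij : i ≠ j) {w : W} (hw : w ∈ V) (hw0 : w ≠ 0)
    (hwe : ⁅S.E i j 0 0, w⁆ = 0) : (∃ l : ℕ, ℓ0 = l) ∧ ℓ1 = 0 := by
  have hk : ∀ (m0 m1 : ℤ) (v : W),
      ⁅(m0 : ℂ) • S.k0 + (m1 : ℂ) • S.k1, v⁆ = ((m0 : ℂ) * ℓ0 + m1 * ℓ1) • v := by
    intro m0 m1 v
    rw [add_lie, smul_lie, smul_lie, h0, h1, smul_smul, smul_smul, add_smul]
  obtain ⟨v, hv, a, hP⟩ :=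
    (S.isSl2Triple hq hij 0 0).exists_hasPrimitiveVectorWith_nat_of_lie_e_eq_zero V
      (fun v hv => by
        rw [add_lie, hk, sub_lie]
        exact V.add_mem
          (V.sub_mem (hV.lie_E_zero_mem v hv i i 0) (hV.lie_E_zero_mem v hv j j 0))
          (V.smul_mem _ hv))
      hw hw0 hwe (hint.exists_pow_toEnd_smul_eq_zero hij.symm _ _ _ w)
  have key : ∀ m : ℤ, ∃ s : ℕ, (ℓ0 - a) + m * ℓ1 = s := by
    intro m
    have hPm : (S.isSl2Triple hq hij.symm 1 m).HasPrimitiveVectorWith v (ℓ0 - a + m * ℓ1) :=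
      { ne_zero := hP.ne_zero
        lie_h := by
          have := hP.lie_h
          rw [add_lie, hk, sub_lie] at this ⊢
          push_cast at this ⊢
          linear_combination (norm := module) -this
        lie_e := hV.lie_E_eq_zero v hv j i 1 m one_pos }
    exact hPm.exists_nat_of_exists_pow_toEnd_f_eq_zero
      (hint.exists_pow_toEnd_smul_eq_zero hij _ _ _ v)
  obtain ⟨hℓ1, s, hs⟩ := eq_zero_and_exists_nat_of_forall_add_int_mul_eq_nat key
  exact ⟨⟨a + s, by push_cast; linear_combination hs⟩, hℓ1⟩

end SlNCq

theorem nonneg_level_and_Omega_nonzero_general (q : ℂ) (hq : q ≠ 0)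
    (N : ℕ) (hN : 2 ≤ N)
    (L : Type*) [LieRing L] [LieAlgebra ℂ L] (S : SlNCq q N L)
    (W : Type*) [AddCommGroup W] [Module ℂ W] [LieRingModule L W] [LieModule ℂ L W]
    [Nontrivial W]
    (Wgr : ℕ → Submodule ℂ W) (hinternal : DirectSum.IsInternal Wgr)
    (hgraded : ∀ (n : ℕ) (i j : Fin N) (m0 m1 : ℤ), ∀ w ∈ Wgr n,
      ⁅S.E i j m0 m1, w⁆ ∈ gradeZ Wgr ((n : ℤ) - m0))
    (hint : S.IsIntegrable W)
    (ℓ0 ℓ1 : ℂ) (h0 : ∀ w : W, ⁅S.k0, w⁆ = ℓ0 • w) (h1 : ∀ w : W, ⁅S.k1, w⁆ = ℓ1 • w) :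
    (∃ l : ℕ, ℓ0 = (l : ℂ)) ∧ ℓ1 = 0 ∧
      (∃ w : W, w ≠ 0 ∧ w ∈ slPlusAnnihilated S W) ∧
      (∀ w ∈ slPlusAnnihilated S W, ⁅S.k1, w⁆ ∈ slPlusAnnihilated S W ∧
        ∀ (i : Fin N) (n : ℤ), ⁅hElt S hN i n, w⁆ ∈ slPlusAnnihilated S W) := by
  obtain ⟨n₀, hne, hlow⟩ :=
    exists_ne_bot_forall_lt_eq_bot_of_iSup_eq_top hinternal.submodule_iSup_eq_top
  have hV := S.isLowestSubspace_of_graded hgraded hlow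
  obtain ⟨w, hwV, hw0, hwΩ⟩ := S.exists_ne_zero_mem_slPlusAnnihilated hq hV hint hne
  let first : Fin N := ⟨0, by omega⟩
  let last : Fin N := ⟨N - 1, by omega⟩
  have hfl : first < last := Fin.lt_def.mpr (by simp only [first, last]; omega)
  obtain ⟨hℓ0, hℓ1⟩ := S.level_eq_nat_and_k1_eq_zero hq hV hint h0 h1 hfl.ne hwV hw0
    (hwΩ.2 first last 0 hfl)
  refine ⟨hℓ0, hℓ1, ⟨w, hw0, hwΩ⟩, fun w hw => ⟨?_, fun i n => ?_⟩⟩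
  · exact S.lie_mem_slPlusAnnihilated (fun y _ => S.lie_central_mem_span S.k1_central) hw
  · exact S.lie_mem_slPlusAnnihilated (fun y hy => S.lie_hElt_mem_span hN hy i n) hw

theorem nonneg_level_and_Omega_nonzero (q : ℂ) (hq : q ≠ 0)
    (hq' : ∀ n : ℕ, n ≠ 0 → q ^ n ≠ 1) (N : ℕ) (hN : 2 ≤ N)
    (L : Type*) [LieRing L] [LieAlgebra ℂ L] (S : SlNCq q N L)
    (W : Type*) [AddCommGroup W] [Module ℂ W] [LieRingModule L W] [LieModule ℂ L W]
    [Nontrivial W]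
    (Wgr : ℕ → Submodule ℂ W) (hinternal : DirectSum.IsInternal Wgr)
    (hgraded : ∀ (n : ℕ) (i j : Fin N) (m0 m1 : ℤ), ∀ w ∈ Wgr n,
      ⁅S.E i j m0 m1, w⁆ ∈ gradeZ Wgr ((n : ℤ) - m0))
    (hint : S.IsIntegrable W)
    (ℓ0 ℓ1 : ℂ) (h0 : ∀ w : W, ⁅S.k0, w⁆ = ℓ0 • w) (h1 : ∀ w : W, ⁅S.k1, w⁆ = ℓ1 • w) :
    (∃ l : ℕ, ℓ0 = (l : ℂ)) ∧ ℓ1 = 0 ∧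
      (∃ w : W, w ≠ 0 ∧ w ∈ slPlusAnnihilated S W) ∧
      (∀ w ∈ slPlusAnnihilated S W, ⁅S.k1, w⁆ ∈ slPlusAnnihilated S W ∧
        ∀ (i : Fin N) (n : ℤ), ⁅hElt S hN i n, w⁆ ∈ slPlusAnnihilated S W) :=
  nonneg_level_and_Omega_nonzero_general q hq N hN L S W Wgr hinternal hgraded hint ℓ0 ℓ1 h0 h1
end

section
/- Let d be a positive integer, let L₁,…,L_d be complex Lie algebras, and for each 1 ≤ i ≤ d let Wᵢ be an irreducible Lᵢ-module of countable dimension over ℂ. Then the tensor product W₁ ⊗ ⋯ ⊗ W_d, with the direct sum Lie algebra L₁ ⊕ ⋯ ⊕ L_d acting so that Lᵢ acts on the i-th tensor factor, is an irreducible (L₁ ⊕ ⋯ ⊕ L_d)-module. -/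
/-!
Let `Aᵢ ⊆ End(Wᵢ)` be the associative algebra generated by the action of `Lᵢ`. Because `Wᵢ` has
countable dimension, Schur's lemma holds in the strong form `End_{Aᵢ}(Wᵢ) = ℂ`: a transcendental
element `x` of a division algebra over `ℂ` would make the uncountably many `(x - c)⁻¹`
linearly independent. So `Aᵢ` maps any nonzero vector to any vector (simplicity) and, by Jacobson
density, kills one of two independent vectors while fixing the other.

Operators of `Aᵢ` acting in the `i`-th slot preserve every Lie submodule `N` of `⨂ Wᵢ`. Write
`0 ≠ t ∈ N` as a sum of pure tensors. If two terms are proportional in every slot they merge;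
otherwise some `S ∈ Aᵢ` kills the second term in slot `i` while fixing the first, and `t` splits
as `S t + (1 - S) t` into elements of `N` with fewer terms. Hence `N` contains a nonzero pure
tensor, and changing its factors one slot at a time gives every pure tensor.
-/

open Cardinal
open scoped DirectSum TensorProduct

universe u v w

theorem DivisionRing.isAlgebraic_of_lift_rank_lt {K : Type u} {D : Type v} [Field K]
    [DivisionRing D] [Algebra K D]
    (h : Cardinal.lift.{u} (Module.rank K D) < Cardinal.lift.{v} #K) (x : D) : IsAlgebraic K x := by
  by_contra hx
  -- the double centralizer of `x` is a field, in which the `(x - c)⁻¹`, `c : K`, are independent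
  let E := Subalgebra.centralizer K (Set.centralizer {x})
  have hxE : x ∈ E := fun y hy => (hy x rfl).symm
  let : Field E := IsField.toField
    { exists_pair_ne := ⟨0, 1, zero_ne_one⟩
      mul_comm := fun a b =>
        Subtype.ext (Set.centralizer_centralizer_comm_of_comm (by simp) _ a.2 _ b.2)
      mul_inv_cancel := fun {a} ha =>
        ⟨⟨(a : D)⁻¹, Set.inv_mem_centralizer₀ a.2⟩,
          Subtype.ext (mul_inv_cancel₀ (Subtype.coe_ne_coe.mpr ha))⟩ }
  have htr : Transcendental K (⟨x, hxE⟩ : E) := fun halg => hx (halg.algHom E.val)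
  have hli := htr.linearIndependent_sub_inv.map' E.val.toLinearMap
    (LinearMap.ker_eq_bot.mpr Subtype.val_injective)
  exact hli.cardinal_lift_le_rank.not_gt h

theorem IsAlgClosed.algebraMap_surjective_of_lift_rank_lt {K : Type u} {D : Type v} [Field K]
    [IsAlgClosed K] [DivisionRing D] [Algebra K D]
    (h : Cardinal.lift.{u} (Module.rank K D) < Cardinal.lift.{v} #K) :
    Function.Surjective (algebraMap K D) :=
  have : Algebra.IsIntegral K D :=
    ⟨fun x => (DivisionRing.isAlgebraic_of_lift_rank_lt h x).isIntegral⟩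
  IsAlgClosed.algebraMap_bijective_of_isIntegral.2

theorem IsSimpleModule.exists_eq_smul_of_lift_rank_lt {K : Type u} {R : Type v} {M : Type w}
    [Field K] [IsAlgClosed K] [Ring R] [Algebra K R] [AddCommGroup M] [Module K M] [Module R M]
    [IsScalarTower K R M] [IsSimpleModule R M]
    (h : Cardinal.lift.{u} (Module.rank K M) < Cardinal.lift.{w} #K) (φ : Module.End R M) :
    ∃ c : K, ∀ m, φ m = c • m := by
  classical
  have : Nontrivial M := IsSimpleModule.nontrivial R M
  obtain ⟨m₀, hm₀⟩ := exists_ne (0 : M)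
  have hev : Function.Injective (LinearMap.applyₗ' K m₀ : Module.End R M →ₗ[K] M) := by
    refine (injective_iff_map_eq_zero _).mpr fun ψ hψ => by_contra fun hψ0 => hm₀ ?_
    exact (ψ.bijective_or_eq_zero.resolve_right hψ0).injective (hψ.trans ψ.map_zero.symm)
  have hrank : Cardinal.lift.{u} (Module.rank K (Module.End R M)) < Cardinal.lift.{w} #K :=
    (lift_le.mpr (LinearMap.rank_le_of_injective _ hev)).trans_lt h
  obtain ⟨c, rfl⟩ := IsAlgClosed.algebraMap_surjective_of_lift_rank_lt hrank φ
  exact ⟨c, fun m => rfl⟩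

theorem IsSemisimpleModule.exists_smul_eq_self_and_smul_eq_zero {K R M : Type*} [Field K]
    [Ring R] [Algebra K R] [AddCommGroup M] [Module K M] [Module R M] [IsScalarTower K R M]
    [IsSemisimpleModule R M] (hschur : ∀ φ : Module.End R M, ∃ c : K, ∀ m, φ m = c • m)
    {a b : M} (hab : a ∉ K ∙ b) : ∃ r : R, r • a = a ∧ r • b = 0 := by
  classical
  obtain ⟨g, hga, hgb⟩ := Submodule.exists_dual_map_eq_bot_of_notMem hab inferInstance
  rw [Submodule.map_span, Set.image_singleton, Submodule.span_singleton_eq_bot] at hgb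
  -- `m ↦ (g m / g a) • a` commutes with the `R`-endomorphisms of `M`, which are all scalars
  let f : Module.End (Module.End R M) M :=
    { toFun := fun m => (g m / g a) • a
      map_add' := fun m n => by simp only [map_add, add_div, add_smul]
      map_smul' := fun ψ m => by
        obtain ⟨c, hc⟩ := hschur ψ
        simp only [Module.End.smul_def, hc, map_smul, smul_eq_mul, mul_div_assoc, mul_smul,
          RingHom.id_apply] }
  obtain ⟨r, hr⟩ := jacobson_density f {a, b}
  refine ⟨r, ?_, ?_⟩
  · rw [← hr a (by simp)]
    simp [f, hga]
  · rw [← hr b (by simp)]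
    simp [f, hgb]

namespace LieModule

section CommRing

variable {K L M : Type*} [CommRing K] [LieRing L] [LieAlgebra K L] [AddCommGroup M] [Module K M]
  [LieRingModule L M] [LieModule K L M]

theorem apply_mem_of_mem_adjoin_toEnd (N : LieSubmodule K L M) {S : Module.End K M}
    (hS : S ∈ Algebra.adjoin K (Set.range (toEnd K L M))) {m : M} (hm : m ∈ N) : S m ∈ N := by
  induction hS using Algebra.adjoin_induction generalizing m with
  | mem S hS =>
    obtain ⟨x, rfl⟩ := hS
    exact N.lie_mem hm
  | algebraMap c => exact N.smul_mem c hm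
  | add S T _ _ hS hT => exact N.add_mem (hS hm) (hT hm)
  | mul S T _ _ hS hT => exact hS (hT hm)

theorem isSimpleModule_adjoin_toEnd [IsIrreducible K L M] :
    IsSimpleModule (Algebra.adjoin K (Set.range (toEnd K L M))) M := by
  have := nontrivial_of_isIrreducible K L M
  refine { eq_bot_or_eq_top := fun q => ?_ }
  let q' : LieSubmodule K L M :=
    { q.restrictScalars K with
      lie_mem := fun {x m} hm => q.smul_mem ⟨_, Algebra.subset_adjoin ⟨x, rfl⟩⟩ hm }
  refine (IsSimpleOrder.eq_bot_or_eq_top q').imp (fun h => ?_) (fun h => ?_)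
  · rw [eq_bot_iff]
    intro m (hm : m ∈ q')
    rw [h] at hm
    exact (Submodule.mem_bot _).mpr ((LieSubmodule.mem_bot m).mp hm)
  · rw [eq_top_iff]
    intro m _
    change m ∈ q'
    rw [h]
    exact LieSubmodule.mem_top m

theorem exists_mem_adjoin_toEnd_apply_eq [IsIrreducible K L M] {a : M} (ha : a ≠ 0) (u : M) :
    ∃ S ∈ Algebra.adjoin K (Set.range (toEnd K L M)), S a = u := by
  have := isSimpleModule_adjoin_toEnd (K := K) (L := L) (M := M)
  obtain ⟨r, hr⟩ :=
    IsSimpleModule.toSpanSingleton_surjective (Algebra.adjoin K (Set.range (toEnd K L M))) ha u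
  exact ⟨r, r.2, hr⟩

end CommRing

theorem exists_mem_adjoin_toEnd_apply_eq_self_and_apply_eq_zero {K : Type u} {L : Type*}
    {M : Type w} [Field K] [IsAlgClosed K] [LieRing L] [LieAlgebra K L] [AddCommGroup M]
    [Module K M] [LieRingModule L M] [LieModule K L M] [IsIrreducible K L M]
    (h : Cardinal.lift.{u} (Module.rank K M) < Cardinal.lift.{w} #K) {a b : M}
    (hab : a ∉ K ∙ b) : ∃ S ∈ Algebra.adjoin K (Set.range (toEnd K L M)), S a = a ∧ S b = 0 := by
  have := isSimpleModule_adjoin_toEnd (K := K) (L := L) (M := M)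
  obtain ⟨r, hr⟩ := IsSemisimpleModule.exists_smul_eq_self_and_smul_eq_zero
    (IsSimpleModule.exists_eq_smul_of_lift_rank_lt
      (R := Algebra.adjoin K (Set.range (toEnd K L M))) h) hab
  exact ⟨r, r.2, hr⟩

end LieModule

namespace PiTensorProduct

section CommSemiring

variable {ι R : Type*} [CommSemiring R] {M : ι → Type*} [∀ i, AddCommMonoid (M i)]
  [∀ i, Module R (M i)]

theorem tprod_mem_span_singleton [Fintype ι] {v w : ∀ i, M i} (h : ∀ i, v i ∈ R ∙ w i) :
    tprod R v ∈ R ∙ tprod R w := by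
  choose c hc using fun i => Submodule.mem_span_singleton.mp (h i)
  refine Submodule.mem_span_singleton.mpr ⟨∏ i, c i, ?_⟩
  rw [← MultilinearMap.map_smul_univ]
  simp only [hc]

variable [DecidableEq ι]

theorem map_mulSingle_tprod (i : ι) (S : Module.End R (M i)) (w : ∀ i, M i) :
    map (Pi.mulSingle i S) (tprod R w) = tprod R (Function.update w i (S (w i))) := by
  rw [map_tprod]
  congr 1
  funext j
  exact Function.apply_update (fun j (F : Module.End R (M j)) => F (w j)) 1 i S j

def mapSingle (i : ι) : Module.End R (M i) →ₐ[R] Module.End R (⨂[R] i, M i) :=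
  AlgHom.ofLinearMap
    { toFun := fun S => map (Pi.mulSingle i S)
      map_add' := fun S T => by
        ext w
        simp only [LinearMap.compMultilinearMap_apply, LinearMap.add_apply, map_mulSingle_tprod,
          MultilinearMap.map_update_add]
      map_smul' := fun c S => by
        ext w
        simp only [LinearMap.compMultilinearMap_apply, LinearMap.smul_apply, map_mulSingle_tprod,
          RingHom.id_apply, MultilinearMap.map_update_smul] }
    (by
      simp only [LinearMap.coe_mk, AddHom.coe_mk, Pi.mulSingle_one]
      exact PiTensorProduct.map_one)
    (fun S T => by
      simp only [LinearMap.coe_mk, AddHom.coe_mk, Pi.mulSingle_mul]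
      exact PiTensorProduct.map_mul _ _)

theorem mapSingle_tprod (i : ι) (S : Module.End R (M i)) (w : ∀ i, M i) :
    mapSingle i S (tprod R w) = tprod R (Function.update w i (S (w i))) :=
  map_mulSingle_tprod i S w

theorem mapSingle_mem_span_image_diff {s : Set (∀ i, M i)} {t : ⨂[R] i, M i}
    (ht : t ∈ Submodule.span R (tprod R '' s)) (i : ι) (S : Module.End R (M i)) {w : ∀ i, M i}
    (hSw : S (w i) = 0) :
    mapSingle i S t ∈ Submodule.span R
      (tprod R '' ((fun v => Function.update v i (S (v i))) '' (s \ {w}))) := by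
  have ht' := Submodule.mem_map_of_mem (f := mapSingle i S) ht
  rw [Submodule.map_span] at ht'
  refine Submodule.span_le.mpr ?_ ht'
  rintro _ ⟨_, ⟨v, hv, rfl⟩, rfl⟩
  rw [mapSingle_tprod]
  by_cases hvw : v = w
  · subst hvw
    rw [MultilinearMap.map_coord_zero _ i (by rw [Function.update_self, hSw])]
    exact zero_mem _
  · exact Submodule.subset_span ⟨_, ⟨v, ⟨hv, hvw⟩, rfl⟩, rfl⟩

end CommSemiring

section Field

variable {ι K : Type*} [Fintype ι] [Field K] {W : ι → Type*} [∀ i, AddCommGroup (W i)]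
  [∀ i, Module K (W i)]

theorem tprod_ne_zero {w : ∀ i, W i} (hw : ∀ i, w i ≠ 0) : tprod K w ≠ 0 := by
  choose f hf using fun i =>
    not_forall.mp (mt (Module.forall_dual_apply_eq_zero_iff K (w i)).mp (hw i))
  intro h
  have := congr_arg (dualDistrib (tprod K f)) h
  rw [dualDistrib_apply, map_zero] at this
  exact Finset.prod_ne_zero_iff.mpr (fun i _ => hf i) this

instance [∀ i, Nontrivial (W i)] : Nontrivial (⨂[K] i, W i) :=
  ⟨⟨tprod K fun i => (exists_ne (0 : W i)).choose, 0,
    tprod_ne_zero fun i => (exists_ne (0 : W i)).choose_spec⟩⟩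

variable [DecidableEq ι] {A : ∀ i, Set (Module.End K (W i))} {N : Submodule K (⨂[K] i, W i)}

theorem exists_tprod_mem_of_mem_span
    (hsep : ∀ i (a b : W i), a ∉ K ∙ b → ∃ S ∈ A i, S a = a ∧ S b = 0)
    (hN : ∀ i, ∀ S ∈ A i, ∀ t ∈ N, mapSingle i S t ∈ N) (s : Finset (∀ i, W i))
    {t : ⨂[K] i, W i} (htN : t ∈ N) (ht : t ≠ 0) (hts : t ∈ Submodule.span K (tprod K '' ↑s)) :
    ∃ w, tprod K w ∈ N ∧ tprod K w ≠ 0 := by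
  classical
  induction hcard : s.card using Nat.strong_induction_on generalizing s t with
  | _ n ih =>
  subst hcard
  rcases le_or_gt s.card 1 with hs | hs
  · obtain ⟨w, hw⟩ := Finset.card_le_one_iff_subset_singleton.mp hs
    have hts' : t ∈ K ∙ tprod K w := Submodule.span_mono
      (by rw [← Set.image_singleton]; exact Set.image_mono (by exact_mod_cast hw)) hts
    obtain ⟨c, rfl⟩ := Submodule.mem_span_singleton.mp hts'
    obtain ⟨hc, hw0⟩ := smul_ne_zero_iff.mp ht
    exact ⟨w, by simpa [hc] using N.smul_mem c⁻¹ htN, hw0⟩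
  have shorter : ∀ (f : (∀ i, W i) → ∀ i, W i) (w) (t' : ⨂[K] i, W i), w ∈ s → t' ∈ N →
      t' ≠ 0 → t' ∈ Submodule.span K (tprod K '' (f '' (↑s \ {w}))) →
      ∃ w, tprod K w ∈ N ∧ tprod K w ≠ 0 := fun f w t' hw htN' ht' hts' =>
    ih _ (Finset.card_image_le.trans_lt (Finset.card_erase_lt_of_mem hw)) ((s.erase w).image f)
      htN' ht' (by simpa using hts') rfl
  obtain ⟨w₁, hw₁, w₂, hw₂, hne⟩ := Finset.one_lt_card.mp hs
  by_cases hprop : ∀ i, w₁ i ∈ K ∙ w₂ i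
  · refine shorter id w₁ t hw₁ htN ht ?_
    rw [Set.image_id]
    refine Submodule.span_le.mpr ?_ hts
    rintro _ ⟨v, hv, rfl⟩
    by_cases hvw : v = w₁
    · subst hvw
      refine Submodule.span_mono ?_ (tprod_mem_span_singleton hprop)
      rw [← Set.image_singleton]
      exact Set.image_mono (by simpa using ⟨hw₂, hne.symm⟩)
    · exact Submodule.subset_span ⟨v, ⟨hv, hvw⟩, rfl⟩
  push Not at hprop
  obtain ⟨i, hi⟩ := hprop
  obtain ⟨S, hSA, hS₁, hS₂⟩ := hsep i _ _ hi
  -- `t = S t + (1 - S) t` in slot `i`, and each summand has a shorter expansion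
  by_cases hSt : mapSingle i S t = 0
  · have h₁ := mapSingle_mem_span_image_diff hts i (1 - S) (w := w₁) (by simp [hS₁])
    rw [map_sub, map_one, LinearMap.sub_apply, Module.End.one_apply, hSt, sub_zero] at h₁
    exact shorter _ w₁ t hw₁ htN ht h₁
  · exact shorter _ w₂ _ hw₂ (hN i S hSA t htN) hSt (mapSingle_mem_span_image_diff hts i S hS₂)

theorem tprod_mem_of_tprod_mem
    (htrans : ∀ i (a u : W i), a ≠ 0 → ∃ S ∈ A i, S a = u)
    (hN : ∀ i, ∀ S ∈ A i, ∀ t ∈ N, mapSingle i S t ∈ N) {w : ∀ i, W i}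
    (hwN : tprod K w ∈ N) (hw : tprod K w ≠ 0) (u : ∀ i, W i) : tprod K u ∈ N := by
  classical
  have hw0 : ∀ i, w i ≠ 0 := fun i hi => hw (MultilinearMap.map_coord_zero _ i hi)
  suffices ∀ σ : Finset ι, tprod K (σ.piecewise u w) ∈ N by
    simpa using this Finset.univ
  intro σ
  induction σ using Finset.induction_on with
  | empty => simpa using hwN
  | insert i σ hi ih =>
    obtain ⟨S, hSA, hS⟩ := htrans i (w i) (u i) (hw0 i)
    have := hN i S hSA _ ih
    rwa [mapSingle_tprod, Finset.piecewise_eq_of_notMem _ _ _ hi, hS,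
      ← Finset.piecewise_insert] at this

theorem eq_bot_or_eq_top_of_forall_mapSingle_mem
    (htrans : ∀ i (a u : W i), a ≠ 0 → ∃ S ∈ A i, S a = u)
    (hsep : ∀ i (a b : W i), a ∉ K ∙ b → ∃ S ∈ A i, S a = a ∧ S b = 0)
    (hN : ∀ i, ∀ S ∈ A i, ∀ t ∈ N, mapSingle i S t ∈ N) : N = ⊥ ∨ N = ⊤ := by
  classical
  refine or_iff_not_imp_left.mpr fun hN0 => ?_
  obtain ⟨t, htN, ht⟩ := N.ne_bot_iff.mp hN0
  have ht_span : t ∈ Submodule.span K (Set.range (tprod K)) := by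
    rw [span_tprod_eq_top]
    trivial
  obtain ⟨T, hT, htT⟩ := Submodule.mem_span_finite_of_mem_span ht_span
  obtain ⟨s, -, rfl⟩ := Finset.subset_set_image_iff.mp (by rwa [Set.image_univ])
  obtain ⟨w, hwN, hw⟩ := exists_tprod_mem_of_mem_span hsep hN s htN ht (by simpa using htT)
  rw [eq_top_iff, ← span_tprod_eq_top, Submodule.span_le]
  rintro _ ⟨u, rfl⟩
  exact tprod_mem_of_tprod_mem htrans hN hwN hw u

end Field

theorem mapSingle_apply_mem_of_mem_adjoin_toEnd {ι K : Type*} [DecidableEq ι] [CommRing K]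
    {L W : ι → Type*} [∀ i, LieRing (L i)] [∀ i, LieAlgebra K (L i)] [∀ i, AddCommGroup (W i)]
    [∀ i, Module K (W i)] [∀ i, LieRingModule (L i) (W i)] [∀ i, LieModule K (L i) (W i)]
    [LieRingModule (⨁ i, L i) (⨂[K] i, W i)] [LieModule K (⨁ i, L i) (⨂[K] i, W i)]
    (hact : ∀ (i : ι) (x : L i) (w : ∀ i, W i),
      ⁅(DirectSum.of L i x : ⨁ i, L i), tprod K w⁆ = tprod K (Function.update w i ⁅x, w i⁆))
    (N : LieSubmodule K (⨁ i, L i) (⨂[K] i, W i)) {i : ι} {S : Module.End K (W i)}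
    (hS : S ∈ Algebra.adjoin K (Set.range (LieModule.toEnd K (L i) (W i))))
    {t : ⨂[K] i, W i} (ht : t ∈ N) : mapSingle i S t ∈ N := by
  refine LieModule.apply_mem_of_mem_adjoin_toEnd N ?_ ht
  have hslot (x : L i) : mapSingle i (LieModule.toEnd K (L i) (W i) x) =
      LieModule.toEnd K (⨁ i, L i) (⨂[K] i, W i) (DirectSum.of L i x) := by
    ext w
    simp [mapSingle_tprod, hact]
  have hle : (Algebra.adjoin K (Set.range (LieModule.toEnd K (L i) (W i)))).map (mapSingle i) ≤
      Algebra.adjoin K (Set.range (LieModule.toEnd K (⨁ i, L i) (⨂[K] i, W i))) := by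
    rw [AlgHom.map_adjoin]
    refine Algebra.adjoin_mono ?_
    rintro _ ⟨_, ⟨x, rfl⟩, rfl⟩
    exact ⟨_, (hslot x).symm⟩
  exact hle (Subalgebra.mem_map.mpr ⟨S, hS, rfl⟩)

end PiTensorProduct

theorem tensor_product_of_irreducible_isIrreducible_general (d : ℕ)
    (L : Fin d → Type*) [∀ i, LieRing (L i)] [∀ i, LieAlgebra ℂ (L i)]
    (W : Fin d → Type*) [∀ i, AddCommGroup (W i)] [∀ i, Module ℂ (W i)]
    [∀ i, LieRingModule (L i) (W i)] [∀ i, LieModule ℂ (L i) (W i)]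
    (hirr : ∀ i, LieModule.IsIrreducible ℂ (L i) (W i))
    (hcount : ∀ i, ∃ s : Set (W i), s.Countable ∧ Submodule.span ℂ s = ⊤)
    [LieRingModule (⨁ i, L i) (⨂[ℂ] i, W i)]
    [LieModule ℂ (⨁ i, L i) (⨂[ℂ] i, W i)]
    (hact : ∀ (i : Fin d) (x : L i) (w : ∀ i, W i),
      ⁅(DirectSum.of L i x : ⨁ i, L i), PiTensorProduct.tprod ℂ w⁆ =
        PiTensorProduct.tprod ℂ (Function.update w i ⁅x, w i⁆)) :
    LieModule.IsIrreducible ℂ (⨁ i, L i) (⨂[ℂ] i, W i) := by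
  have hrank i : Module.rank ℂ (W i) ≤ ℵ₀ := by
    obtain ⟨s, hs, hspan⟩ := hcount i
    rw [← rank_top, ← hspan]
    exact (rank_span_le s).trans hs.le_aleph0
  have : ∀ i, Nontrivial (W i) := fun i => LieModule.nontrivial_of_isIrreducible ℂ (L i) (W i)
  refine LieModule.IsIrreducible.mk fun N hN0 => ?_
  have := PiTensorProduct.eq_bot_or_eq_top_of_forall_mapSingle_mem
    (A := fun i => Algebra.adjoin ℂ (Set.range (LieModule.toEnd ℂ (L i) (W i))))
    (N := N.toSubmodule)
    (fun i _ u ha => LieModule.exists_mem_adjoin_toEnd_apply_eq ha u)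
    (fun i _ _ hab => LieModule.exists_mem_adjoin_toEnd_apply_eq_self_and_apply_eq_zero
      (by simpa [mk_complex] using (hrank i).trans_lt aleph0_lt_continuum) hab)
    (fun i _ hS _ ht => PiTensorProduct.mapSingle_apply_mem_of_mem_adjoin_toEnd hact N hS ht)
  simpa [hN0] using this

/-- a tensor product of irreducible modules of countable dimension over the
complex numbers, viewed as a module for the direct sum Lie algebra (each factor acting in
its own tensor slot), is irreducible. -/
theorem tensor_product_of_irreducible_isIrreducible (d : ℕ) (hd : 0 < d)
    (L : Fin d → Type*) [∀ i, LieRing (L i)] [∀ i, LieAlgebra ℂ (L i)]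
    (W : Fin d → Type*) [∀ i, AddCommGroup (W i)] [∀ i, Module ℂ (W i)]
    [∀ i, LieRingModule (L i) (W i)] [∀ i, LieModule ℂ (L i) (W i)]
    (hirr : ∀ i, LieModule.IsIrreducible ℂ (L i) (W i))
    (hcount : ∀ i, ∃ s : Set (W i), s.Countable ∧ Submodule.span ℂ s = ⊤)
    [LieRingModule (⨁ i, L i) (⨂[ℂ] i, W i)]
    [LieModule ℂ (⨁ i, L i) (⨂[ℂ] i, W i)]
    (hact : ∀ (i : Fin d) (x : L i) (w : ∀ i, W i),
      ⁅(DirectSum.of L i x : ⨁ i, L i), PiTensorProduct.tprod ℂ w⁆ =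
        PiTensorProduct.tprod ℂ (Function.update w i ⁅x, w i⁆)) :
    LieModule.IsIrreducible ℂ (⨁ i, L i) (⨂[ℂ] i, W i) :=
  tensor_product_of_irreducible_isIrreducible_general d L W hirr hcount hact
end
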